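/- arXiv:1408.6054 — 6 statements merged into one kernel-verified Lean document; each statement's English description precedes it below -/
import Mathlib

section
/- Let E be a set, let φ : ℝ → E → E satisfy the flow property, let T > 0, and let γ : E → ℝ be such that for every p ∈ E the map t ↦ γ(φ t p) is continuous and bounded on ℝ. Define c(p) = (2/T)·∫₀^T (T − t)·γ(φ t p) dt. Then for every p ∈ E the function τ ↦ c(φ τ p) is differentiable at τ = 0 and its derivative there equals (2/T)·∫₀^T γ(φ t p) dt − 2γ(p), i.e. 2⟨γ⟩_T(p) − 2γ(p). -/
/-- For a flow `φ` and a damping `γ` which is continuous and bounded along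
each flow line, the weighted average `c p = (2/T) ∫₀ᵀ (T - t) γ(φ t p) dt` satisfies:
`τ ↦ c (φ τ p)` is differentiable at `τ = 0` with derivative
`(2/T) ∫₀ᵀ γ(φ t p) dt − 2 γ p = 2⟨γ⟩_T(p) − 2γ(p)`. -/
theorem stmt0 {E : Type*} (φ : ℝ → E → E)
    (hflow0 : ∀ p, φ 0 p = p)
    (hflow : ∀ s t : ℝ, ∀ p, φ (s + t) p = φ s (φ t p))
    (T : ℝ) (hT : 0 < T) (γ : E → ℝ)
    (hcont : ∀ p, Continuous fun t : ℝ => γ (φ t p))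
    (hbdd : ∀ p, ∃ M : ℝ, ∀ t : ℝ, |γ (φ t p)| ≤ M)
    (c : E → ℝ)
    (hc : ∀ p, c p = (2 / T) * ∫ t in (0:ℝ)..T, (T - t) * γ (φ t p)) :
    ∀ p, HasDerivAt (fun τ : ℝ => c (φ τ p))
      ((2 / T) * (∫ t in (0:ℝ)..T, γ (φ t p)) - 2 * γ p) 0 := by
  intro p
  set g : ℝ → ℝ := fun t => γ (φ t p) with hg_def
  have hg : Continuous g := hcont p
  have hg2 : Continuous fun s : ℝ => s * g s := continuous_id.mul hg
  set G : ℝ → ℝ := fun x => ∫ t in (0:ℝ)..x, g t with hG_def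
  set H : ℝ → ℝ := fun x => ∫ t in (0:ℝ)..x, t * g t with hH_def
  have hG : ∀ x, HasDerivAt G (g x) x := fun x =>
    intervalIntegral.integral_hasDerivAt_right (hg.intervalIntegrable 0 x)
      (hg.stronglyMeasurableAtFilter _ _) hg.continuousAt
  have hH : ∀ x, HasDerivAt H (x * g x) x := fun x =>
    intervalIntegral.integral_hasDerivAt_right (hg2.intervalIntegrable 0 x)
      (hg2.stronglyMeasurableAtFilter _ _) hg2.continuousAt
  -- function equality
  have key : ∀ τ : ℝ, c (φ τ p)
      = (2 / T) * ((T + τ) * (G (T + τ) - G τ) - (H (T + τ) - H τ)) := by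
    intro τ
    rw [hc]
    congr 1
    have h1 : ∀ t : ℝ, γ (φ t (φ τ p)) = g (t + τ) := by
      intro t; rw [hg_def]; simp only []; rw [← hflow t τ p]
    calc (∫ t in (0:ℝ)..T, (T - t) * γ (φ t (φ τ p)))
        = ∫ t in (0:ℝ)..T, ((T + τ) - (t + τ)) * g (t + τ) := by
          apply intervalIntegral.integral_congr
          intro t _; dsimp only; rw [h1 t]; ring
      _ = ∫ s in (0:ℝ)+τ..T+τ, ((T + τ) - s) * g s :=
          intervalIntegral.integral_comp_add_right (fun s => ((T + τ) - s) * g s) τ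
      _ = ∫ s in τ..T+τ, ((T + τ) * g s - s * g s) := by
          rw [zero_add]; apply intervalIntegral.integral_congr; intro s _; ring
      _ = (∫ s in τ..T+τ, (T + τ) * g s) - ∫ s in τ..T+τ, s * g s :=
          intervalIntegral.integral_sub ((continuous_const.mul hg).intervalIntegrable _ _)
            (hg2.intervalIntegrable _ _)
      _ = (T + τ) * (G (T + τ) - G τ) - (H (T + τ) - H τ) := by
          rw [intervalIntegral.integral_const_mul]
          rw [intervalIntegral.integral_interval_sub_left (hg.intervalIntegrable _ _)
            (hg.intervalIntegrable _ _),
            intervalIntegral.integral_interval_sub_left (hg2.intervalIntegrable _ _)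
            (hg2.intervalIntegrable _ _)]
  -- derivative of the RHS
  have hadd : HasDerivAt (fun τ : ℝ => T + τ) 1 0 := by
    simpa using (hasDerivAt_id (0:ℝ)).const_add T
  have hGT : HasDerivAt (fun τ : ℝ => G (T + τ)) (g (T + 0) * 1) 0 :=
    (hG (T + 0)).comp 0 hadd
  have hHT : HasDerivAt (fun τ : ℝ => H (T + τ)) ((T + 0) * g (T + 0) * 1) 0 :=
    (hH (T + 0)).comp 0 hadd
  have hD : HasDerivAt (fun τ : ℝ => (2 / T) * ((T + τ) * (G (T + τ) - G τ) - (H (T + τ) - H τ)))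
      ((2 / T) * ((1 * (G (T + 0) - G 0) + (T + 0) * (g (T + 0) * 1 - g 0))
        - ((T + 0) * g (T + 0) * 1 - 0 * g 0))) 0 := by
    exact (((hadd.mul (hGT.sub (hG 0))).sub (hHT.sub (hH 0))).const_mul (2 / T))
  have hmain := hD.congr_of_eventuallyEq (Filter.Eventually.of_forall key)
  refine hmain.congr_deriv ?_
  have hG0 : G 0 = 0 := intervalIntegral.integral_same
  have hg0 : g 0 = γ p := by rw [hg_def]; simp [hflow0]
  have hGT0 : G (T + 0) = ∫ t in (0:ℝ)..T, γ (φ t p) := by rw [add_zero]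
  rw [hG0, hg0, hGT0]
  field_simp
  ring
end

section
/- Let E be a set, let φ : ℝ → E → E satisfy the flow property, let T > 0, and let γ : E → ℝ be nonnegative and such that for every p ∈ E the map t ↦ γ(φ t p) is continuous and bounded on ℝ. Define c(p) = (2/T)·∫₀^T (T − t)·γ(φ t p) dt and a(p) = exp(c(p)). Then for every p ∈ E the function τ ↦ a(φ τ p) is differentiable at τ = 0 with derivative exp(c(p))·(2⟨γ⟩_T(p) − 2γ(p)); consequently 2·a(p)·γ(p) + (d/dτ)|_{τ=0} a(φ τ p) = 2·exp(c(p))·⟨γ⟩_T(p), and if moreover α > 0 satisfies ⟨γ⟩_T(p) ≥ α, then 2·a(p)·γ(p) + (d/dτ)|_{τ=0} a(φ τ p) ≥ 2α. -/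
open MeasureTheory intervalIntegral


/-- For a flow `φ` and a nonnegative damping `γ` which is continuous and
bounded along each flow line, with `c p = (2/T) ∫₀ᵀ (T - t) γ(φ t p) dt` and
`a p = exp (c p)`, the map `τ ↦ a (φ τ p)` is differentiable at `0` with derivative
`exp (c p) * (2⟨γ⟩_T(p) − 2γ(p))`; consequently
`2 a(p) γ(p) + (d/dτ)|₀ a(φ τ p) = 2 exp(c p) ⟨γ⟩_T(p)`, and if `α > 0` satisfies
`⟨γ⟩_T(p) ≥ α` then `2 a(p) γ(p) + (d/dτ)|₀ a(φ τ p) ≥ 2α`. -/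
theorem stmt1 {E : Type*} (φ : ℝ → E → E)
    (hflow0 : ∀ p, φ 0 p = p)
    (hflow : ∀ s t : ℝ, ∀ p, φ (s + t) p = φ s (φ t p))
    (T : ℝ) (hT : 0 < T) (γ : E → ℝ) (hγnonneg : ∀ p, 0 ≤ γ p)
    (hcont : ∀ p, Continuous fun t : ℝ => γ (φ t p))
    (hbdd : ∀ p, ∃ M : ℝ, ∀ t : ℝ, |γ (φ t p)| ≤ M)
    (c : E → ℝ)
    (hc : ∀ p, c p = (2 / T) * ∫ t in (0:ℝ)..T, (T - t) * γ (φ t p))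
    (a : E → ℝ) (ha : ∀ p, a p = Real.exp (c p)) :
    ∀ p, HasDerivAt (fun τ : ℝ => a (φ τ p))
        (Real.exp (c p) *
          (2 * ((1 / T) * ∫ t in (0:ℝ)..T, γ (φ t p)) - 2 * γ p)) 0
      ∧ 2 * a p * γ p + deriv (fun τ : ℝ => a (φ τ p)) 0
          = 2 * Real.exp (c p) * ((1 / T) * ∫ t in (0:ℝ)..T, γ (φ t p))
      ∧ ∀ α : ℝ, 0 < α → α ≤ (1 / T) * ∫ t in (0:ℝ)..T, γ (φ t p) →
          2 * α ≤ 2 * a p * γ p + deriv (fun τ : ℝ => a (φ τ p)) 0 := by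
  intro p
  set g : ℝ → ℝ := fun t => γ (φ t p) with hgdef
  have hgc : Continuous g := hcont p
  have htgc : Continuous fun s : ℝ => s * g s := continuous_id.mul hgc
  have hint : ∀ u v : ℝ, IntervalIntegrable g volume u v := fun u v =>
    hgc.intervalIntegrable u v
  have hintt : ∀ u v : ℝ, IntervalIntegrable (fun s => s * g s) volume u v := fun u v =>
    htgc.intervalIntegrable u v
  set G : ℝ → ℝ := fun x => ∫ s in (0:ℝ)..x, g s with hGdef
  set H : ℝ → ℝ := fun x => ∫ s in (0:ℝ)..x, s * g s with hHdef
  -- key reparametrization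
  have key : ∀ τ : ℝ, c (φ τ p) =
      (2 / T) * ((T + τ) * (G (T + τ) - G τ) - (H (T + τ) - H τ)) := by
    intro τ
    rw [hc]
    congr 1
    have comp : ∀ t : ℝ, γ (φ t (φ τ p)) = g (t + τ) := fun t => by
      rw [hgdef]; simp only [← hflow]
    calc (∫ t in (0:ℝ)..T, (T - t) * γ (φ t (φ τ p)))
        = ∫ t in (0:ℝ)..T, (fun s => (T + τ - s) * g s) (t + τ) := by
          apply intervalIntegral.integral_congr
          intro t _
          simp only [comp]
          ring
      _ = ∫ s in (0+τ:ℝ)..(T+τ), (T + τ - s) * g s :=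
          intervalIntegral.integral_comp_add_right (fun s => (T + τ - s) * g s) τ
      _ = ∫ s in τ..(T+τ), ((T + τ) * g s - s * g s) := by
          rw [zero_add]
          apply intervalIntegral.integral_congr
          intro s _; ring
      _ = (T + τ) * (G (T + τ) - G τ) - (H (T + τ) - H τ) := by
          rw [intervalIntegral.integral_sub ((hint τ (T+τ)).const_mul _) (hintt τ (T+τ)),
            intervalIntegral.integral_const_mul]
          congr 1
          · congr 1
            rw [hGdef]
            simp only []
            rw [← intervalIntegral.integral_interval_sub_left (hint 0 (T+τ)) (hint 0 τ)]
          · rw [hHdef]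
            simp only []
            rw [← intervalIntegral.integral_interval_sub_left (hintt 0 (T+τ)) (hintt 0 τ)]
  -- derivatives of G and H
  have hG : ∀ x : ℝ, HasDerivAt G (g x) x := fun x =>
    intervalIntegral.integral_hasDerivAt_right (hint 0 x)
      (hgc.stronglyMeasurable.stronglyMeasurableAtFilter) hgc.continuousAt
  have hH : ∀ x : ℝ, HasDerivAt H (x * g x) x := fun x =>
    intervalIntegral.integral_hasDerivAt_right (hintt 0 x)
      (htgc.stronglyMeasurable.stronglyMeasurableAtFilter) htgc.continuousAt
  -- derivative of τ ↦ c (φ τ p) at 0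
  have hshift : ∀ x : ℝ, HasDerivAt (fun τ : ℝ => T + τ) 1 x := fun x => by
    simpa using (hasDerivAt_id x).const_add T
  have hGT : HasDerivAt (fun τ : ℝ => G (T + τ)) (g T) 0 := by
    simpa [Function.comp_def] using (hG (T + 0)).comp 0 (hshift 0)
  have hHT : HasDerivAt (fun τ : ℝ => H (T + τ)) (T * g T) 0 := by
    simpa [Function.comp_def] using (hH (T + 0)).comp 0 (hshift 0)
  have hG0 : HasDerivAt G (g 0) 0 := hG 0
  have hH0 : HasDerivAt H (0 * g 0) 0 := hH 0
  have hF : HasDerivAt (fun τ : ℝ => (2 / T) *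
      ((T + τ) * (G (T + τ) - G τ) - (H (T + τ) - H τ)))
      ((2 / T) * ((1 * (G (T + 0) - G 0) + (T + 0) * (g T - g 0)) - (T * g T - 0 * g 0))) 0 := by
    exact ((((hshift 0).mul (hGT.sub hG0)).sub (hHT.sub hH0)).const_mul (2 / T))
  have hceq : (fun τ : ℝ => c (φ τ p)) = fun τ : ℝ =>
      (2 / T) * ((T + τ) * (G (T + τ) - G τ) - (H (T + τ) - H τ)) := funext key
  have hG00 : G 0 = 0 := intervalIntegral.integral_same
  have hg0 : g 0 = γ p := by rw [hgdef]; simp [hflow0]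
  have hd : HasDerivAt (fun τ : ℝ => c (φ τ p))
      (2 * ((1 / T) * G T) - 2 * γ p) 0 := by
    rw [hceq]
    convert hF using 1
    rw [hG00, hg0]
    field_simp
    ring
  -- exp composition
  have haeq : (fun τ : ℝ => a (φ τ p)) = fun τ : ℝ => Real.exp (c (φ τ p)) := by
    funext τ; rw [ha]
  have hc0 : c (φ 0 p) = c p := by rw [hflow0]
  have hmain : HasDerivAt (fun τ : ℝ => a (φ τ p))
      (Real.exp (c p) * (2 * ((1 / T) * ∫ t in (0:ℝ)..T, γ (φ t p)) - 2 * γ p)) 0 := by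
    rw [haeq]
    have := hd.exp
    rw [hc0] at this
    exact this
  refine ⟨hmain, ?_, ?_⟩
  · rw [hmain.deriv, ha]
    ring
  · intro α hα hαle
    rw [hmain.deriv, ha]
    have hcp : 0 ≤ c p := by
      rw [hc]
      apply mul_nonneg (by positivity)
      apply intervalIntegral.integral_nonneg hT.le
      intro u hu
      exact mul_nonneg (by linarith [hu.2]) (hγnonneg _)
    have hexp : 1 ≤ Real.exp (c p) := Real.one_le_exp hcp
    have : 2 * α ≤ 2 * Real.exp (c p) * ((1 / T) * ∫ t in (0:ℝ)..T, γ (φ t p)) := by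
      calc 2 * α = 2 * 1 * α := by ring
        _ ≤ 2 * Real.exp (c p) * ((1 / T) * ∫ t in (0:ℝ)..T, γ (φ t p)) := by
            apply mul_le_mul (by nlinarith) hαle hα.le (by positivity)
    linarith [this, mul_nonneg (mul_nonneg (by norm_num : (0:ℝ) ≤ 2) (Real.exp_nonneg (c p))) (hγnonneg p)]
end

section
/- Let γ : ℝ^d → ℝ be bounded, nonnegative and uniformly continuous, and let ε > 0. Then there exists a function γ̲ : ℝ^d → ℝ of class C_b^∞ on ℝ^d such that: (i) 0 ≤ γ̲(x) ≤ γ(x) for all x; (ii) γ̲(x) ≥ γ(x) − 2ε for all x; and (iii) γ̲(x) = 0 for every x with γ(x) < ε/2 (in particular the support of γ̲ is contained in the support of γ). -/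
open MeasureTheory Metric Function
open scoped Convolution Topology

lemma key_bound {d : ℕ} (f : EuclideanSpace ℝ (Fin d) → ℝ) (hf : Continuous f)
    (M : ℝ) (hM : ∀ x, |f x| ≤ M) :
    ∀ (n : ℕ), ∀ (F' F'' : Type) [NormedAddCommGroup F'] [NormedSpace ℝ F']
      [NormedAddCommGroup F''] [NormedSpace ℝ F'']
      (k : EuclideanSpace ℝ (Fin d) → F'), ContDiff ℝ (⊤ : ℕ∞) k →
      HasCompactSupport k → ∀ (L : F' →L[ℝ] ℝ →L[ℝ] F''),
      ∃ C : ℝ, ∀ x, ‖iteratedFDeriv ℝ n (k ⋆[L, volume] f) x‖ ≤ C := by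
  intro n
  induction n with
  | zero =>
    intro F' F'' _ _ _ _ k hk hks L
    have hkint : Integrable (fun t => ‖k t‖) volume :=
      (hk.continuous.norm).integrable_of_hasCompactSupport hks.norm
    refine ⟨∫ t, ‖L‖ * ‖k t‖ * M, fun x => ?_⟩
    rw [norm_iteratedFDeriv_zero]
    rw [convolution_def]
    refine norm_integral_le_of_norm_le ((hkint.const_mul ‖L‖).mul_const M) ?_
    filter_upwards with t
    calc ‖(L (k t)) (f (x - t))‖ ≤ ‖L‖ * ‖k t‖ * ‖f (x - t)‖ := L.le_opNorm₂ _ _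
      _ ≤ ‖L‖ * ‖k t‖ * M := by
          refine mul_le_mul_of_nonneg_left ?_ (by positivity)
          rw [Real.norm_eq_abs]; exact hM _
  | succ n ih =>
    intro F' F'' _ _ _ _ k hk hks L
    have hfl : LocallyIntegrable f volume := hf.locallyIntegrable
    have hder : fderiv ℝ (k ⋆[L, volume] f)
        = (fderiv ℝ k) ⋆[L.precompL (EuclideanSpace ℝ (Fin d)), volume] f := by
      funext x
      exact (hks.hasFDerivAt_convolution_left L (hk.of_le (by simp)) hfl x).fderiv
    obtain ⟨C, hC⟩ := ih (EuclideanSpace ℝ (Fin d) →L[ℝ] F')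
      (EuclideanSpace ℝ (Fin d) →L[ℝ] F'') (fderiv ℝ k)
      (hk.fderiv_right (by simp)) (hks.fderiv ℝ) (L.precompL _)
    refine ⟨C, fun x => ?_⟩
    rw [← norm_iteratedFDeriv_fderiv, hder]
    exact hC x



/-- A bounded, nonnegative, uniformly continuous damping `γ` on `ℝ^d`
can be regularised: for every `ε > 0` there is a `C_b^∞` function `γ'` with
`0 ≤ γ' ≤ γ`, `γ' ≥ γ − 2ε`, and `γ' = 0` wherever `γ < ε/2`. -/
theorem stmt3 {d : ℕ} (γ : EuclideanSpace ℝ (Fin d) → ℝ)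
    (hbdd : ∃ M : ℝ, ∀ x, |γ x| ≤ M) (hnonneg : ∀ x, 0 ≤ γ x)
    (hUC : UniformContinuous γ) (ε : ℝ) (hε : 0 < ε) :
    ∃ γ' : EuclideanSpace ℝ (Fin d) → ℝ,
      ContDiff ℝ (⊤ : ℕ∞) γ' ∧
      (∀ n : ℕ, ∃ C : ℝ, ∀ x, ‖iteratedFDeriv ℝ n γ' x‖ ≤ C) ∧
      (∀ x, 0 ≤ γ' x ∧ γ' x ≤ γ x) ∧
      (∀ x, γ x - 2 * ε ≤ γ' x) ∧
      (∀ x, γ x < ε / 2 → γ' x = 0) := by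
  obtain ⟨M, hM⟩ := hbdd
  obtain ⟨δ, hδpos, hδ⟩ := Metric.uniformContinuous_iff.mp hUC (ε / 2) (by linarith)
  set f : EuclideanSpace ℝ (Fin d) → ℝ := fun x => max (γ x - ε) 0 with hfdef
  have hfc : Continuous f := (hUC.continuous.sub continuous_const).max continuous_const
  have hf0 : ∀ x, 0 ≤ f x := fun x => le_max_right _ _
  have hfle : ∀ x, f x ≤ γ x := fun x => max_le (by linarith [hnonneg x]) (hnonneg x)
  have hfM : ∀ x, |f x| ≤ M := fun x => by
    rw [abs_of_nonneg (hf0 x)]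
    exact (hfle x).trans ((le_abs_self _).trans (hM x))
  set φ : ContDiffBump (0 : EuclideanSpace ℝ (Fin d)) :=
    ⟨δ / 2, δ, by positivity, by linarith⟩ with hφdef
  set k : EuclideanSpace ℝ (Fin d) → ℝ := φ.normed volume with hkdef
  have hk0 : ∀ t, 0 ≤ k t := φ.nonneg_normed
  have hkc : Continuous k := φ.continuous_normed
  have hks : HasCompactSupport k := φ.hasCompactSupport_normed
  have hkint : Integrable k volume := φ.integrable_normed
  have hk1 : ∫ t, k t = 1 := φ.integral_normed
  have hksupp : ∀ t : EuclideanSpace ℝ (Fin d), k t ≠ 0 → ‖t‖ < δ := by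
    intro t ht
    have hmem : t ∈ Function.support k := Function.mem_support.mpr ht
    rw [hkdef, φ.support_normed_eq (μ := volume)] at hmem
    simpa [mem_ball_zero_iff] using hmem
  have hdist : ∀ (x t : EuclideanSpace ℝ (Fin d)), k t ≠ 0 → |γ (x - t) - γ x| < ε / 2 := by
    intro x t ht
    have h1 : dist (x - t) x < δ := by
      rw [dist_eq_norm]
      simpa using hksupp t ht
    have := hδ h1
    rwa [Real.dist_eq] at this
  set γ' : EuclideanSpace ℝ (Fin d) → ℝ :=
    k ⋆[ContinuousLinearMap.lsmul ℝ ℝ, volume] f with hγ'def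
  have hγ'eq : ∀ x, γ' x = ∫ t, k t * f (x - t) := by
    intro x
    rw [hγ'def, convolution_def]
    simp [ContinuousLinearMap.lsmul_apply, smul_eq_mul]
  have hint : ∀ x, Integrable (fun t => k t * f (x - t)) volume := by
    intro x
    refine (hkc.mul (hfc.comp (continuous_const.sub continuous_id))).integrable_of_hasCompactSupport ?_
    exact hks.mul_right
  refine ⟨γ', ?_, ?_, ?_, ?_, ?_⟩
  · exact hks.contDiff_convolution_left _ φ.contDiff_normed hfc.locallyIntegrable
  · intro n
    exact key_bound f hfc M hfM n ℝ ℝ k φ.contDiff_normed hks _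
  · intro x
    constructor
    · rw [hγ'eq]
      exact integral_nonneg fun t => mul_nonneg (hk0 t) (hf0 _)
    · rw [hγ'eq]
      have hle : ∀ t, k t * f (x - t) ≤ k t * γ x := by
        intro t
        rcases eq_or_ne (k t) 0 with h | h
        · simp [h]
        · refine mul_le_mul_of_nonneg_left ?_ (hk0 t)
          have := hdist x t h
          have hγlt : γ (x - t) < γ x + ε / 2 := by
            cases abs_lt.mp this; linarith
          exact max_le (by linarith) (hnonneg x)
      calc ∫ t, k t * f (x - t) ≤ ∫ t, k t * γ x :=
            integral_mono (hint x) (hkint.mul_const _) hle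
        _ = γ x := by rw [integral_mul_const, hk1, one_mul]
  · intro x
    rw [hγ'eq]
    have hle : ∀ t, k t * (γ x - 2 * ε) ≤ k t * f (x - t) := by
      intro t
      rcases eq_or_ne (k t) 0 with h | h
      · simp [h]
      · refine mul_le_mul_of_nonneg_left ?_ (hk0 t)
        have := hdist x t h
        have hγgt : γ x - ε / 2 < γ (x - t) := by
          cases abs_lt.mp this; linarith
        refine le_trans ?_ (le_max_left _ _)
        linarith
    calc γ x - 2 * ε = ∫ t, k t * (γ x - 2 * ε) := by
          rw [integral_mul_const, hk1, one_mul]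
      _ ≤ ∫ t, k t * f (x - t) := integral_mono (hkint.mul_const _) (hint x) hle
  · intro x hx
    rw [hγ'eq]
    have : ∀ t, k t * f (x - t) = 0 := by
      intro t
      rcases eq_or_ne (k t) 0 with h | h
      · simp [h]
      · have := hdist x t h
        have hγlt : γ (x - t) < ε := by
          cases abs_lt.mp this; linarith
        have : f (x - t) = 0 := max_eq_right (by linarith)
        simp [this]
    simp [this]
end

section
/- Let K : ℝ^d → M_d(ℝ) be a uniformly elliptic smooth metric, let ω ⊆ ℝ^d, and let ψ : ℝ^d → ℝ be of class C_b^∞ with a constant α₀ > 0 such that ‖∇ψ(x)‖ ≥ α₀ for all x ∉ ω. For λ > 0 set φ = e^{λψ} and define the Carleman symbols q_R(x,ξ) = ξᵀK(x)ξ − ∇φ(x)ᵀK(x)∇φ(x) and q_I(x,ξ) = 2∇φ(x)ᵀK(x)ξ. Then there exists λ₀ > 0 such that for every λ ≥ λ₀ there is β > 0 with the Hörmander sub-ellipticity property: for all x ∈ ℝ^d \ ω and all ξ ∈ ℝ^d with q_R(x,ξ) = 0 and q_I(x,ξ) = 0, one has {q_R, q_I}(x,ξ) ≥ β. -/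
/-- The Poisson bracket `{f, g}(x,ξ) = ∇_ξ f · ∇_x g − ∇_x f · ∇_ξ g` of two symbols
`f, g : ℝ^d × ℝ^d → ℝ`, written in the coordinates of `EuclideanSpace ℝ (Fin d)`. -/
noncomputable def poissonBracket {d : ℕ}
    (f g : EuclideanSpace ℝ (Fin d) → EuclideanSpace ℝ (Fin d) → ℝ)
    (x ξ : EuclideanSpace ℝ (Fin d)) : ℝ :=
  ∑ i : Fin d,
    (fderiv ℝ (f x) ξ (EuclideanSpace.single i 1) *
        fderiv ℝ (fun x' => g x' ξ) x (EuclideanSpace.single i 1) -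
      fderiv ℝ (fun x' => f x' ξ) x (EuclideanSpace.single i 1) *
        fderiv ℝ (g x) ξ (EuclideanSpace.single i 1))

/-- The quadratic form `ξᵀ K(x) ξ` associated to a metric `K`. -/
def quadForm {d : ℕ} (K : EuclideanSpace ℝ (Fin d) → Matrix (Fin d) (Fin d) ℝ)
    (x ξ : EuclideanSpace ℝ (Fin d)) : ℝ :=
  ∑ i, ∑ j, ξ i * K x i j * ξ j

/-- The Carleman weight `φ = e^{λψ}`. -/
noncomputable def carlemanWeight {d : ℕ} (ψ : EuclideanSpace ℝ (Fin d) → ℝ) (lam : ℝ)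
    (x : EuclideanSpace ℝ (Fin d)) : ℝ := Real.exp (lam * ψ x)

/-- The real part of the Carleman symbol: `q_R(x,ξ) = ξᵀK(x)ξ − ∇φ(x)ᵀK(x)∇φ(x)`. -/
noncomputable def carlemanQR {d : ℕ}
    (K : EuclideanSpace ℝ (Fin d) → Matrix (Fin d) (Fin d) ℝ)
    (ψ : EuclideanSpace ℝ (Fin d) → ℝ) (lam : ℝ)
    (x ξ : EuclideanSpace ℝ (Fin d)) : ℝ :=
  quadForm K x ξ - quadForm K x (gradient (carlemanWeight ψ lam) x)

/-- The imaginary part of the Carleman symbol: `q_I(x,ξ) = 2 ∇φ(x)ᵀK(x)ξ`. -/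
noncomputable def carlemanQI {d : ℕ}
    (K : EuclideanSpace ℝ (Fin d) → Matrix (Fin d) (Fin d) ℝ)
    (ψ : EuclideanSpace ℝ (Fin d) → ℝ) (lam : ℝ)
    (x ξ : EuclideanSpace ℝ (Fin d)) : ℝ :=
  2 * ∑ i, ∑ j, (gradient (carlemanWeight ψ lam) x) i * K x i j * ξ j


open EuclideanSpace Finset
open scoped RealInnerProductSpace

section Aux
variable {d : ℕ}
local notation "E" => EuclideanSpace ℝ (Fin d)

lemma quad_hasFDerivAt (c : Fin d → Fin d → ℝ) (ξ : E) :
    HasFDerivAt (fun y : E => ∑ j, ∑ k, y j * c j k * y k)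
      (∑ j, ∑ k, ((ξ j * c j k) • (proj k : E →L[ℝ] ℝ) +
        ξ k • ((c j k) • (proj j : E →L[ℝ] ℝ)))) ξ := by
  apply HasFDerivAt.fun_sum
  intro j _
  apply HasFDerivAt.fun_sum
  intro k _
  exact (((proj j : E →L[ℝ] ℝ).hasFDerivAt.mul_const (c j k)).mul
    (proj k : E →L[ℝ] ℝ).hasFDerivAt)

lemma quad_fderiv_apply (c : Fin d → Fin d → ℝ) (ξ v : E) :
    fderiv ℝ (fun y : E => ∑ j, ∑ k, y j * c j k * y k) ξ v
      = ∑ j, ∑ k, (ξ j * c j k * v k + ξ k * (c j k * v j)) := by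
  rw [(quad_hasFDerivAt c ξ).fderiv]
  simp [ContinuousLinearMap.sum_apply]

lemma quad_fderiv_single (c : Fin d → Fin d → ℝ) (hsym : ∀ j k, c j k = c k j)
    (ξ : E) (i : Fin d) :
    fderiv ℝ (fun y : E => ∑ j, ∑ k, y j * c j k * y k) ξ (single i 1)
      = 2 * ∑ k, c i k * ξ k := by
  rw [quad_fderiv_apply]
  simp only [EuclideanSpace.single_apply, mul_ite, mul_one, mul_zero, Finset.sum_add_distrib,
    Finset.sum_ite_eq', Finset.mem_univ, if_true]
  rw [Finset.sum_comm (f := fun j k => if j = i then ξ k * c j k else 0)]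
  simp only [Finset.sum_ite_eq', Finset.mem_univ, if_true]
  have h1 : ∑ x, ξ x * c x i = ∑ k, c i k * ξ k :=
    Finset.sum_congr rfl (fun x _ => by rw [hsym x i]; ring)
  have h2 : ∑ x, ξ x * c i x = ∑ k, c i k * ξ k :=
    Finset.sum_congr rfl (fun x _ => by ring)
  rw [h1, h2, two_mul]

lemma grad_coord (f : E → ℝ) (x : E) (j : Fin d) :
    (gradient f x) j = fderiv ℝ f x (single j 1) := by
  have h : (inner ℝ ((InnerProductSpace.toDual ℝ E).symm (fderiv ℝ f x)) (single j 1) : ℝ)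
      = fderiv ℝ f x (single j 1) := InnerProductSpace.toDual_symm_apply
  rw [EuclideanSpace.inner_single_right] at h
  simpa [gradient] using h

lemma weight_hasFDerivAt (ψ : E → ℝ) (lam : ℝ) (x : E) (hψ : DifferentiableAt ℝ ψ x) :
    HasFDerivAt (fun y => Real.exp (lam * ψ y))
      ((lam * Real.exp (lam * ψ x)) • fderiv ℝ ψ x) x := by
  have h1 : HasFDerivAt (fun y => lam * ψ y) (lam • fderiv ℝ ψ x) x :=
    hψ.hasFDerivAt.const_mul lam
  have h2 := (Real.hasDerivAt_exp (lam * ψ x)).comp_hasFDerivAt x h1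
  rw [smul_smul, mul_comm (Real.exp (lam * ψ x)) lam] at h2
  exact h2

lemma gradW_coord (ψ : E → ℝ) (lam : ℝ) (y : E) (hψ : DifferentiableAt ℝ ψ y) (j : Fin d) :
    gradient (fun z => Real.exp (lam * ψ z)) y j
      = lam * Real.exp (lam * ψ y) * fderiv ℝ ψ y (single j 1) := by
  rw [grad_coord, (weight_hasFDerivAt ψ lam y hψ).fderiv]
  simp

lemma hasFDerivAt_psiD (ψ : E → ℝ) (hψ : ContDiff ℝ (⊤ : ℕ∞) ψ) (x : E) (j : Fin d) :
    HasFDerivAt (fun y => fderiv ℝ ψ y (single j 1))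
      ((fderiv ℝ (fderiv ℝ ψ) x).flip (single j 1)) x := by
  have hc : HasFDerivAt (fderiv ℝ ψ) (fderiv ℝ (fderiv ℝ ψ) x) x :=
    (((hψ.fderiv_right (m := (⊤:ℕ∞)) (by exact_mod_cast le_top)).differentiable (by simp)) x).hasFDerivAt
  have h := hc.clm_apply (hasFDerivAt_const (single j 1 : E) x)
  simpa using h

lemma hasFDerivAt_aj (ψ : E → ℝ) (hψ : ContDiff ℝ (⊤ : ℕ∞) ψ) (lam : ℝ) (x : E) (j : Fin d) :
    HasFDerivAt (fun y => lam * Real.exp (lam * ψ y) * fderiv ℝ ψ y (single j 1))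
      (lam • (Real.exp (lam * ψ x) • ((fderiv ℝ (fderiv ℝ ψ) x).flip (single j 1)) +
        fderiv ℝ ψ x (single j 1) • ((lam * Real.exp (lam * ψ x)) • fderiv ℝ ψ x))) x := by
  have h1 := ((weight_hasFDerivAt ψ lam x ((hψ.differentiable (by simp)) x)).mul
    (hasFDerivAt_psiD ψ hψ x j)).const_mul lam
  simpa [mul_assoc] using h1

noncomputable def psiG {d : ℕ} (ψ : EuclideanSpace ℝ (Fin d) → ℝ) (x : EuclideanSpace ℝ (Fin d))
    (j : Fin d) : ℝ := fderiv ℝ ψ x (EuclideanSpace.single j 1)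

noncomputable def psiH {d : ℕ} (ψ : EuclideanSpace ℝ (Fin d) → ℝ) (x : EuclideanSpace ℝ (Fin d))
    (i j : Fin d) : ℝ := fderiv ℝ (fderiv ℝ ψ) x (EuclideanSpace.single i 1) (EuclideanSpace.single j 1)

noncomputable def KDer {d : ℕ} (K : EuclideanSpace ℝ (Fin d) → Matrix (Fin d) (Fin d) ℝ)
    (x : EuclideanSpace ℝ (Fin d)) (i j k : Fin d) : ℝ :=
  fderiv ℝ (fun y => K y j k) x (EuclideanSpace.single i 1)

lemma aj_fderiv_single (ψ : E → ℝ) (hψ : ContDiff ℝ (⊤ : ℕ∞) ψ) (lam : ℝ) (x : E) (i j : Fin d) :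
    fderiv ℝ (fun y => lam * Real.exp (lam * ψ y) * fderiv ℝ ψ y (single j 1)) x (single i 1)
      = lam * Real.exp (lam * ψ x) * (lam * psiG ψ x i * psiG ψ x j + psiH ψ x i j) := by
  rw [(hasFDerivAt_aj ψ hψ lam x j).fderiv]
  simp [psiG, psiH]
  ring

lemma hasFDerivAt_qI (K : E → Matrix (Fin d) (Fin d) ℝ)
    (hK : ∀ i j : Fin d, ContDiff ℝ (⊤ : ℕ∞) fun x => K x i j)
    (ψ : E → ℝ) (hψ : ContDiff ℝ (⊤ : ℕ∞) ψ) (lam : ℝ) (x ξ : E) :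
    HasFDerivAt (fun y => 2 * ∑ j, ∑ k,
        (lam * Real.exp (lam * ψ y) * fderiv ℝ ψ y (single j 1)) * K y j k * ξ k)
      ((2:ℝ) • ∑ j, ∑ k, (ξ k) • (((lam * Real.exp (lam * ψ x) * fderiv ℝ ψ x (single j 1)) •
          fderiv ℝ (fun y => K y j k) x) +
        (K x j k) • (lam • (Real.exp (lam * ψ x) • ((fderiv ℝ (fderiv ℝ ψ) x).flip (single j 1)) +
          fderiv ℝ ψ x (single j 1) • ((lam * Real.exp (lam * ψ x)) • fderiv ℝ ψ x))))) x := by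
  have h : ∀ j k : Fin d, HasFDerivAt
      (fun y => (lam * Real.exp (lam * ψ y) * fderiv ℝ ψ y (single j 1)) * K y j k * ξ k)
      ((ξ k) • (((lam * Real.exp (lam * ψ x) * fderiv ℝ ψ x (single j 1)) •
          fderiv ℝ (fun y => K y j k) x) +
        (K x j k) • (lam • (Real.exp (lam * ψ x) • ((fderiv ℝ (fderiv ℝ ψ) x).flip (single j 1)) +
          fderiv ℝ ψ x (single j 1) • ((lam * Real.exp (lam * ψ x)) • fderiv ℝ ψ x))))) x := by
    intro j k
    exact ((hasFDerivAt_aj ψ hψ lam x j).mul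
      (((hK j k).differentiable (by simp)) x).hasFDerivAt).mul_const (ξ k)
  exact (HasFDerivAt.fun_sum (fun j _ => HasFDerivAt.fun_sum (fun k _ => h j k))).const_mul 2

lemma qI_fderiv_x (K : E → Matrix (Fin d) (Fin d) ℝ)
    (hK : ∀ i j : Fin d, ContDiff ℝ (⊤ : ℕ∞) fun x => K x i j)
    (ψ : E → ℝ) (hψ : ContDiff ℝ (⊤ : ℕ∞) ψ) (lam : ℝ) (x ξ : E) (i : Fin d) :
    fderiv ℝ (fun y => 2 * ∑ j, ∑ k,
        (lam * Real.exp (lam * ψ y) * fderiv ℝ ψ y (single j 1)) * K y j k * ξ k) x (single i 1)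
      = 2 * ∑ j, ∑ k,
        ((lam * Real.exp (lam * ψ x) * (lam * psiG ψ x i * psiG ψ x j + psiH ψ x i j)) * K x j k
          + (lam * Real.exp (lam * ψ x) * psiG ψ x j) * KDer K x i j k) * ξ k := by
  rw [(hasFDerivAt_qI K hK ψ hψ lam x ξ).fderiv]
  simp only [ContinuousLinearMap.coe_smul', Pi.smul_apply, ContinuousLinearMap.coe_sum',
    Finset.sum_apply, ContinuousLinearMap.add_apply, ContinuousLinearMap.flip_apply,
    smul_eq_mul, nsmul_eq_mul, Nat.cast_ofNat]
  congr 1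
  apply Finset.sum_congr rfl; intro j _
  apply Finset.sum_congr rfl; intro k _
  simp only [psiG, psiH, KDer]
  ring

lemma hasFDerivAt_qR (K : E → Matrix (Fin d) (Fin d) ℝ)
    (hK : ∀ i j : Fin d, ContDiff ℝ (⊤ : ℕ∞) fun x => K x i j)
    (ψ : E → ℝ) (hψ : ContDiff ℝ (⊤ : ℕ∞) ψ) (lam : ℝ) (x ξ : E) :
    HasFDerivAt (fun y => (∑ j, ∑ k, ξ j * K y j k * ξ k)
        - ∑ j, ∑ k, (lam * Real.exp (lam * ψ y) * fderiv ℝ ψ y (single j 1)) * K y j k *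
            (lam * Real.exp (lam * ψ y) * fderiv ℝ ψ y (single k 1)))
      ((∑ j, ∑ k, (ξ k) • ((ξ j) • fderiv ℝ (fun y => K y j k) x))
        - ∑ j, ∑ k,
          (((lam * Real.exp (lam * ψ x) * fderiv ℝ ψ x (single j 1)) * K x j k) •
            (lam • (Real.exp (lam * ψ x) • ((fderiv ℝ (fderiv ℝ ψ) x).flip (single k 1)) +
              fderiv ℝ ψ x (single k 1) • ((lam * Real.exp (lam * ψ x)) • fderiv ℝ ψ x)))
          + (lam * Real.exp (lam * ψ x) * fderiv ℝ ψ x (single k 1)) •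
            ((lam * Real.exp (lam * ψ x) * fderiv ℝ ψ x (single j 1)) •
                fderiv ℝ (fun y => K y j k) x
              + (K x j k) •
                (lam • (Real.exp (lam * ψ x) • ((fderiv ℝ (fderiv ℝ ψ) x).flip (single j 1)) +
                  fderiv ℝ ψ x (single j 1) • ((lam * Real.exp (lam * ψ x)) • fderiv ℝ ψ x))))))
      x := by
  apply HasFDerivAt.sub
  · apply HasFDerivAt.fun_sum; intro j _
    apply HasFDerivAt.fun_sum; intro k _
    exact ((((hK j k).differentiable (by simp)) x).hasFDerivAt.const_mul
      (ξ j)).mul_const (ξ k)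
  · apply HasFDerivAt.fun_sum; intro j _
    apply HasFDerivAt.fun_sum; intro k _
    exact ((hasFDerivAt_aj ψ hψ lam x j).mul
      (((hK j k).differentiable (by simp)) x).hasFDerivAt).mul
      (hasFDerivAt_aj ψ hψ lam x k)

lemma qR_fderiv_x (K : E → Matrix (Fin d) (Fin d) ℝ)
    (hK : ∀ i j : Fin d, ContDiff ℝ (⊤ : ℕ∞) fun x => K x i j)
    (ψ : E → ℝ) (hψ : ContDiff ℝ (⊤ : ℕ∞) ψ) (lam : ℝ) (x ξ : E) (i : Fin d) :
    fderiv ℝ (fun y => (∑ j, ∑ k, ξ j * K y j k * ξ k)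
        - ∑ j, ∑ k, (lam * Real.exp (lam * ψ y) * fderiv ℝ ψ y (single j 1)) * K y j k *
            (lam * Real.exp (lam * ψ y) * fderiv ℝ ψ y (single k 1))) x (single i 1)
      = (∑ j, ∑ k, ξ j * KDer K x i j k * ξ k)
        - ∑ j, ∑ k,
          ((lam * Real.exp (lam * ψ x) * (lam * psiG ψ x i * psiG ψ x j + psiH ψ x i j)) *
              K x j k * (lam * Real.exp (lam * ψ x) * psiG ψ x k)
            + (lam * Real.exp (lam * ψ x) * psiG ψ x j) * KDer K x i j k *
              (lam * Real.exp (lam * ψ x) * psiG ψ x k)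
            + (lam * Real.exp (lam * ψ x) * psiG ψ x j) * K x j k *
              (lam * Real.exp (lam * ψ x) * (lam * psiG ψ x i * psiG ψ x k + psiH ψ x i k))) := by
  rw [(hasFDerivAt_qR K hK ψ hψ lam x ξ).fderiv]
  simp only [ContinuousLinearMap.sub_apply, ContinuousLinearMap.coe_smul', Pi.smul_apply,
    ContinuousLinearMap.coe_sum', Finset.sum_apply, ContinuousLinearMap.add_apply,
    ContinuousLinearMap.flip_apply, smul_eq_mul]
  congr 1
  · apply Finset.sum_congr rfl; intro j _
    apply Finset.sum_congr rfl; intro k _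
    simp only [KDer]; ring
  · apply Finset.sum_congr rfl; intro j _
    apply Finset.sum_congr rfl; intro k _
    simp only [psiG, psiH, KDer]; ring

lemma qI_fderiv_xi (K : E → Matrix (Fin d) (Fin d) ℝ) (a : Fin d → ℝ) (x ξ : E) (i : Fin d) :
    fderiv ℝ (fun y : E => 2 * ∑ j, ∑ k, a j * K x j k * y k) ξ (single i 1)
      = 2 * ∑ j, a j * K x j i := by
  have h : HasFDerivAt (fun y : E => 2 * ∑ j, ∑ k, a j * K x j k * y k)
      ((2:ℝ) • ∑ j, ∑ k, (a j * K x j k) • (proj k : E →L[ℝ] ℝ)) ξ := by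
    apply HasFDerivAt.const_mul
    apply HasFDerivAt.fun_sum; intro j _
    apply HasFDerivAt.fun_sum; intro k _
    exact (proj k : E →L[ℝ] ℝ).hasFDerivAt.const_mul (a j * K x j k)
  rw [h.fderiv]
  have hp : ∀ k : Fin d, (proj k : E →L[ℝ] ℝ) (single i 1) = if k = i then 1 else 0 := by
    intro k; show (single i 1 : E) k = _; simp [EuclideanSpace.single_apply]
  simp only [ContinuousLinearMap.coe_smul', Pi.smul_apply, ContinuousLinearMap.coe_sum',
    Finset.sum_apply, smul_eq_mul, hp, mul_ite, mul_one, mul_zero, Finset.sum_ite_eq',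
    Finset.mem_univ, if_true]

lemma fderiv_apply_bound (ψ : E → ℝ) (x v : E) (C : ℝ)
    (h : ‖iteratedFDeriv ℝ 1 ψ x‖ ≤ C) : |fderiv ℝ ψ x v| ≤ C * ‖v‖ := by
  have h0 : fderiv ℝ ψ x v = iteratedFDeriv ℝ 1 ψ x ![v] := by
    rw [iteratedFDeriv_one_apply]; simp
  rw [h0, ← Real.norm_eq_abs]
  calc ‖iteratedFDeriv ℝ 1 ψ x ![v]‖ ≤ ‖iteratedFDeriv ℝ 1 ψ x‖ * ∏ i, ‖(![v] : Fin 1 → E) i‖ :=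
        ContinuousMultilinearMap.le_opNorm _ _
    _ = ‖iteratedFDeriv ℝ 1 ψ x‖ * ‖v‖ := by simp
    _ ≤ C * ‖v‖ := mul_le_mul_of_nonneg_right h (norm_nonneg v)

lemma snd_deriv_bound (ψ : E → ℝ) (x v w : E) (C : ℝ)
    (h : ‖iteratedFDeriv ℝ 2 ψ x‖ ≤ C) : |fderiv ℝ (fderiv ℝ ψ) x v w| ≤ C * ‖v‖ * ‖w‖ := by
  have h0 : fderiv ℝ (fderiv ℝ ψ) x v w = iteratedFDeriv ℝ 2 ψ x ![v, w] := by
    rw [iteratedFDeriv_two_apply]; simp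
  rw [h0, ← Real.norm_eq_abs]
  calc ‖iteratedFDeriv ℝ 2 ψ x ![v, w]‖
      ≤ ‖iteratedFDeriv ℝ 2 ψ x‖ * ∏ i, ‖(![v, w] : Fin 2 → E) i‖ :=
        ContinuousMultilinearMap.le_opNorm _ _
    _ = ‖iteratedFDeriv ℝ 2 ψ x‖ * (‖v‖ * ‖w‖) := by
        rw [Fin.prod_univ_two]; simp
    _ ≤ C * (‖v‖ * ‖w‖) := by
        refine mul_le_mul_of_nonneg_right h (by positivity)
    _ = C * ‖v‖ * ‖w‖ := by ring

lemma coord_le_norm (ξ : E) (k : Fin d) : |ξ k| ≤ ‖ξ‖ := by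
  have h : (inner ℝ ξ (single k 1) : ℝ) = ξ k := by
    rw [EuclideanSpace.inner_single_right]; simp
  rw [← h]
  calc |(inner ℝ ξ (single k 1) : ℝ)| ≤ ‖ξ‖ * ‖(single k 1 : E)‖ := abs_real_inner_le_norm _ _
    _ = ‖ξ‖ := by simp

lemma quadForm_single (K : E → Matrix (Fin d) (Fin d) ℝ) (x : E) (j : Fin d) :
    quadForm K x (single j 1) = K x j j := by
  simp [quadForm, EuclideanSpace.single_apply, ite_mul, mul_ite, Finset.sum_ite_eq',
    Finset.sum_ite_eq]

lemma entry_bound (K : E → Matrix (Fin d) (Fin d) ℝ) (x : E)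
    (hKsymm : (K x).IsSymm) (Kinf Ksup : ℝ) (hKinf : 0 < Kinf)
    (hell : ∀ ξ : E, Kinf * ‖ξ‖ ^ 2 ≤ quadForm K x ξ ∧ quadForm K x ξ ≤ Ksup * ‖ξ‖ ^ 2)
    (j k : Fin d) : |K x j k| ≤ Ksup := by
  have hjj : Kinf ≤ K x j j ∧ K x j j ≤ Ksup := by
    have h := hell (single j 1)
    rw [quadForm_single] at h
    simpa using h
  have hkk : Kinf ≤ K x k k ∧ K x k k ≤ Ksup := by
    have h := hell (single k 1)
    rw [quadForm_single] at h
    simpa using h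
  rcases eq_or_ne j k with rfl | hjk
  · rw [abs_of_nonneg (le_of_lt (lt_of_lt_of_le hKinf hjj.1))]
    exact hjj.2
  · have hplus : quadForm K x (single j 1 + single k 1)
        = K x j j + K x j k + K x k j + K x k k := by
      simp [quadForm, PiLp.add_apply, EuclideanSpace.single_apply, ite_mul, mul_ite, add_mul,
        mul_add, Finset.sum_add_distrib, Finset.sum_ite_eq', Finset.sum_ite_eq]
      ring
    have hminus : quadForm K x (single j 1 - single k 1)
        = K x j j - K x j k - K x k j + K x k k := by
      simp [quadForm, PiLp.sub_apply, EuclideanSpace.single_apply, ite_mul, mul_ite, sub_mul,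
        mul_sub, Finset.sum_sub_distrib, Finset.sum_ite_eq', Finset.sum_ite_eq]
      ring
    have hnp : ‖(single j 1 + single k 1 : E)‖ ^ 2 = 2 := by
      rw [norm_add_sq_real]
      simp [EuclideanSpace.inner_single_left, EuclideanSpace.single_apply, hjk.symm]
      norm_num
    have hnm : ‖(single j 1 - single k 1 : E)‖ ^ 2 = 2 := by
      rw [norm_sub_sq_real]
      simp [EuclideanSpace.inner_single_left, EuclideanSpace.single_apply, hjk.symm]
      norm_num
    have h1 := (hell (single j 1 + single k 1)).2
    have h2 := (hell (single j 1 - single k 1)).2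
    rw [hplus, hnp] at h1
    rw [hminus, hnm] at h2
    have hsymjk : K x k j = K x j k := hKsymm.apply j k
    rw [abs_le]
    constructor <;> nlinarith [hjj.1, hkk.1, hjj.2, hkk.2, hKinf.le]

lemma gradW_coord' (ψ : E → ℝ) (hψ : ContDiff ℝ (⊤ : ℕ∞) ψ) (lam : ℝ) (y : E) (j : Fin d) :
    gradient (carlemanWeight ψ lam) y j = lam * Real.exp (lam * ψ y) * fderiv ℝ ψ y (single j 1) := by
  rw [show carlemanWeight ψ lam = fun z => Real.exp (lam * ψ z) from rfl]
  exact gradW_coord ψ lam y ((hψ.differentiable (by simp)) y) j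

lemma quad_sub_fderiv_single (c : Fin d → Fin d → ℝ) (hsym : ∀ j k, c j k = c k j)
    (b : ℝ) (ξ : E) (i : Fin d) :
    fderiv ℝ (fun y : E => (∑ j, ∑ k, y j * c j k * y k) - b) ξ (single i 1)
      = 2 * ∑ k, c i k * ξ k := by
  rw [fderiv_sub_const, quad_fderiv_single c hsym ξ i]

end Aux

lemma absum {d : ℕ} (f : Fin d → ℝ) (b : ℝ) (h : ∀ k, |f k| ≤ b) :
    |∑ k, f k| ≤ d * b := by
  calc |∑ k, f k| ≤ ∑ k, |f k| := Finset.abs_sum_le_sum_abs _ _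
    _ ≤ ∑ _k : Fin d, b := Finset.sum_le_sum (fun k _ => h k)
    _ = d * b := by simp [mul_comm]

lemma absum2 {d : ℕ} (f : Fin d → Fin d → ℝ) (b : ℝ) (h : ∀ j k, |f j k| ≤ b) :
    |∑ j, ∑ k, f j k| ≤ d * (d * b) :=
  absum _ _ (fun j => absum _ _ (h j))

lemma mulbound {x y X Y : ℝ} (hx : |x| ≤ X) (hy : |y| ≤ Y) : |x * y| ≤ X * Y := by
  rw [abs_mul]
  exact mul_le_mul hx hy (abs_nonneg _) ((abs_nonneg x).trans hx)

lemma core {d : ℕ} (P : Fin d → Fin d → ℝ) (P' : Fin d → Fin d → Fin d → ℝ)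
    (G : Fin d → ℝ) (H : Fin d → Fin d → ℝ) (xi : Fin d → ℝ) (A B C D : Fin d → ℝ)
    (c lam MP MP' MG MH ρ Kq : ℝ)
    (hsym : ∀ j k, P j k = P k j)
    (hMP : ∀ j k, |P j k| ≤ MP) (hMP' : ∀ i j k, |P' i j k| ≤ MP')
    (hMG : ∀ j, |G j| ≤ MG) (hMH : ∀ i j, |H i j| ≤ MH)
    (hxi : ∀ k, |xi k| ≤ c * ρ)
    (hc : 0 ≤ c) (hlam : 0 ≤ lam) (hρ : 0 ≤ ρ) (hKq : 0 ≤ Kq)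
    (hMP0 : 0 ≤ MP) (hMP'0 : 0 ≤ MP') (hMG0 : 0 ≤ MG) (hMH0 : 0 ≤ MH)
    (hA : ∀ i, A i = 2 * ∑ k, P i k * xi k)
    (hB : ∀ i, B i = 2 * ∑ j, c * G j * P j i)
    (hC : ∀ i, C i = 2 * ∑ j, ∑ k,
        (c * (lam * G i * G j + H i j) * P j k + c * G j * P' i j k) * xi k)
    (hD : ∀ i, D i = (∑ j, ∑ k, xi j * P' i j k * xi k)
        - ∑ j, ∑ k, (c * (lam * G i * G j + H i j) * P j k * (c * G k)
            + c * G j * P' i j k * (c * G k)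
            + c * G j * P j k * (c * (lam * G i * G k + H i k))))
    (hS : (∑ j, ∑ k, G j * (P j k * xi k)) = 0)
    (hQ : Kq ≤ ∑ j, ∑ k, G j * (P j k * G k)) :
    4 * lam * c ^ 3 * Kq ^ 2
      - c ^ 3 * (d * (4 * (d * (MP * ρ)) * (d * (d * (MH * (MP * ρ))) + d * (d * (MG * (MP' * ρ))))
        + 2 * (d * (MP * MG)) * (d * (d * (ρ * (MP' * ρ))))
        + 2 * (d * (MP * MG)) * (d * (d * (MH * (MP * MG))) + d * (d * (MG * (MP' * MG)))
            + d * (d * (MG * (MP * MH))))))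
      ≤ ∑ i, (A i * C i - D i * B i) := by
  set S : ℝ := ∑ j, ∑ k, G j * (P j k * xi k) with hSdef
  set Q : ℝ := ∑ j, ∑ k, G j * (P j k * G k) with hQdef
  set Kxi : Fin d → ℝ := fun i => ∑ k, P i k * xi k with hKxidef
  set Kg : Fin d → ℝ := fun i => ∑ k, P i k * G k with hKgdef
  set Xh : Fin d → ℝ := fun i => ∑ j, ∑ k, H i j * (P j k * xi k) with hXhdef
  set Xk : Fin d → ℝ := fun i => ∑ j, ∑ k, G j * (P' i j k * xi k) with hXkdef
  set Zp : Fin d → ℝ := fun i => ∑ j, ∑ k, xi j * (P' i j k * xi k) with hZpdef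
  set Yh : Fin d → ℝ := fun i => ∑ j, ∑ k, H i j * (P j k * G k) with hYhdef
  set Yg : Fin d → ℝ := fun i => ∑ j, ∑ k, G j * (P' i j k * G k) with hYgdef
  set Yh' : Fin d → ℝ := fun i => ∑ j, ∑ k, G j * (P j k * H i k) with hYh'def
  -- rewritten forms
  have hA2 : ∀ i, A i = 2 * Kxi i := by
    intro i; rw [hA, hKxidef]
  have hB2 : ∀ i, B i = 2 * (c * Kg i) := by
    intro i; rw [hB, hKgdef]
    simp only [Finset.mul_sum]
    refine Finset.sum_congr rfl fun j _ => by rw [hsym j i]; ring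
  have hC2 : ∀ i, C i = 2 * (c * lam * G i * S + c * Xh i + c * Xk i) := by
    intro i; rw [hC, hSdef, hXhdef, hXkdef]
    simp only [Finset.mul_sum, ← Finset.sum_add_distrib]
    refine Finset.sum_congr rfl fun j _ => Finset.sum_congr rfl fun k _ => by ring
  have hD2 : ∀ i, D i = Zp i - (2 * (c * c) * lam * G i * Q + c * c * Yh i + c * c * Yg i
      + c * c * Yh' i) := by
    intro i; rw [hD, hZpdef, hQdef, hYhdef, hYgdef, hYh'def]
    congr 1
    · refine Finset.sum_congr rfl fun j _ => Finset.sum_congr rfl fun k _ => by ring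
    · simp only [Finset.mul_sum, ← Finset.sum_add_distrib]
      refine Finset.sum_congr rfl fun j _ => Finset.sum_congr rfl fun k _ => by ring
  have hGKxi : ∑ i, G i * Kxi i = S := by
    rw [hSdef, hKxidef]
    exact Finset.sum_congr rfl fun i _ => by rw [Finset.mul_sum]
  have hGKg : ∑ i, G i * Kg i = Q := by
    rw [hQdef, hKgdef]
    exact Finset.sum_congr rfl fun i _ => by rw [Finset.mul_sum]
  have key : ∀ i, A i * C i - D i * B i
      = 4 * c * lam * S * (G i * Kxi i) + 4 * c ^ 3 * lam * Q * (G i * Kg i)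
        + (4 * c * (Kxi i * (Xh i + Xk i)) - 2 * c * (Kg i * Zp i)
          + 2 * c ^ 3 * (Kg i * (Yh i + Yg i + Yh' i))) := by
    intro i; rw [hA2, hB2, hC2, hD2]; ring
  have hsplit : ∑ i, (A i * C i - D i * B i)
      = 4 * c * lam * S * S + 4 * c ^ 3 * lam * Q * Q
        + ∑ i, (4 * c * (Kxi i * (Xh i + Xk i)) - 2 * c * (Kg i * Zp i)
          + 2 * c ^ 3 * (Kg i * (Yh i + Yg i + Yh' i))) := by
    rw [Finset.sum_congr rfl fun i _ => key i]
    rw [Finset.sum_add_distrib, Finset.sum_add_distrib, ← Finset.mul_sum, ← Finset.mul_sum,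
      hGKxi, hGKg]
  -- bounds
  have hKxiB : ∀ i, |Kxi i| ≤ d * (MP * (c * ρ)) := fun i =>
    absum _ _ (fun k => mulbound (hMP i k) (hxi k))
  have hKgB : ∀ i, |Kg i| ≤ d * (MP * MG) := fun i =>
    absum _ _ (fun k => mulbound (hMP i k) (hMG k))
  have hXhB : ∀ i, |Xh i| ≤ d * (d * (MH * (MP * (c * ρ)))) := fun i =>
    absum2 _ _ (fun j k => mulbound (hMH i j) (mulbound (hMP j k) (hxi k)))
  have hXkB : ∀ i, |Xk i| ≤ d * (d * (MG * (MP' * (c * ρ)))) := fun i =>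
    absum2 _ _ (fun j k => mulbound (hMG j) (mulbound (hMP' i j k) (hxi k)))
  have hZpB : ∀ i, |Zp i| ≤ d * (d * ((c * ρ) * (MP' * (c * ρ)))) := fun i =>
    absum2 _ _ (fun j k => mulbound (hxi j) (mulbound (hMP' i j k) (hxi k)))
  have hYhB : ∀ i, |Yh i| ≤ d * (d * (MH * (MP * MG))) := fun i =>
    absum2 _ _ (fun j k => mulbound (hMH i j) (mulbound (hMP j k) (hMG k)))
  have hYgB : ∀ i, |Yg i| ≤ d * (d * (MG * (MP' * MG))) := fun i =>
    absum2 _ _ (fun j k => mulbound (hMG j) (mulbound (hMP' i j k) (hMG k)))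
  have hYh'B : ∀ i, |Yh' i| ≤ d * (d * (MG * (MP * MH))) := fun i =>
    absum2 _ _ (fun j k => mulbound (hMG j) (mulbound (hMP j k) (hMH i k)))
  have herr : ∀ i, |4 * c * (Kxi i * (Xh i + Xk i)) - 2 * c * (Kg i * Zp i)
      + 2 * c ^ 3 * (Kg i * (Yh i + Yg i + Yh' i))|
      ≤ c ^ 3 * (4 * (d * (MP * ρ)) * (d * (d * (MH * (MP * ρ))) + d * (d * (MG * (MP' * ρ))))
        + 2 * (d * (MP * MG)) * (d * (d * (ρ * (MP' * ρ))))
        + 2 * (d * (MP * MG)) * (d * (d * (MH * (MP * MG))) + d * (d * (MG * (MP' * MG)))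
            + d * (d * (MG * (MP * MH))))) := by
    intro i
    have h1 : |4 * c * (Kxi i * (Xh i + Xk i))|
        ≤ 4 * c * ((d * (MP * (c * ρ))) * (d * (d * (MH * (MP * (c * ρ))))
          + d * (d * (MG * (MP' * (c * ρ)))))) := by
      rw [abs_mul, abs_of_nonneg (by positivity : (0:ℝ) ≤ 4 * c)]
      refine mul_le_mul_of_nonneg_left ?_ (by positivity)
      refine mulbound (hKxiB i) ((abs_add_le _ _).trans (add_le_add (hXhB i) (hXkB i)))
    have h2 : |2 * c * (Kg i * Zp i)|
        ≤ 2 * c * ((d * (MP * MG)) * (d * (d * ((c * ρ) * (MP' * (c * ρ)))))) := by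
      rw [abs_mul, abs_of_nonneg (by positivity : (0:ℝ) ≤ 2 * c)]
      refine mul_le_mul_of_nonneg_left ?_ (by positivity)
      exact mulbound (hKgB i) (hZpB i)
    have h3 : |2 * c ^ 3 * (Kg i * (Yh i + Yg i + Yh' i))|
        ≤ 2 * c ^ 3 * ((d * (MP * MG)) * (d * (d * (MH * (MP * MG))) + d * (d * (MG * (MP' * MG)))
            + d * (d * (MG * (MP * MH))))) := by
      rw [abs_mul, abs_of_nonneg (by positivity : (0:ℝ) ≤ 2 * c ^ 3)]
      refine mul_le_mul_of_nonneg_left ?_ (by positivity)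
      refine mulbound (hKgB i) (((abs_add_le _ _).trans (add_le_add ((abs_add_le _ _).trans
        (add_le_add (hYhB i) (hYgB i))) (hYh'B i))))
    calc |4 * c * (Kxi i * (Xh i + Xk i)) - 2 * c * (Kg i * Zp i)
          + 2 * c ^ 3 * (Kg i * (Yh i + Yg i + Yh' i))|
        ≤ |4 * c * (Kxi i * (Xh i + Xk i)) - 2 * c * (Kg i * Zp i)|
          + |2 * c ^ 3 * (Kg i * (Yh i + Yg i + Yh' i))| := abs_add_le _ _
      _ ≤ (|4 * c * (Kxi i * (Xh i + Xk i))| + |2 * c * (Kg i * Zp i)|)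
          + |2 * c ^ 3 * (Kg i * (Yh i + Yg i + Yh' i))| := by
            have h := abs_add_le (4 * c * (Kxi i * (Xh i + Xk i))) (-(2 * c * (Kg i * Zp i)))
            rw [abs_neg, ← sub_eq_add_neg] at h
            linarith
      _ ≤ (4 * c * ((d * (MP * (c * ρ))) * (d * (d * (MH * (MP * (c * ρ))))
            + d * (d * (MG * (MP' * (c * ρ))))))
          + 2 * c * ((d * (MP * MG)) * (d * (d * ((c * ρ) * (MP' * (c * ρ)))))))
          + 2 * c ^ 3 * ((d * (MP * MG)) * (d * (d * (MH * (MP * MG)))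
            + d * (d * (MG * (MP' * MG))) + d * (d * (MG * (MP * MH))))) :=
          add_le_add (add_le_add h1 h2) h3
      _ = c ^ 3 * (4 * (d * (MP * ρ)) * (d * (d * (MH * (MP * ρ))) + d * (d * (MG * (MP' * ρ))))
          + 2 * (d * (MP * MG)) * (d * (d * (ρ * (MP' * ρ))))
          + 2 * (d * (MP * MG)) * (d * (d * (MH * (MP * MG))) + d * (d * (MG * (MP' * MG)))
              + d * (d * (MG * (MP * MH))))) := by ring
  -- conclude
  have herrsum : |∑ i, (4 * c * (Kxi i * (Xh i + Xk i)) - 2 * c * (Kg i * Zp i)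
      + 2 * c ^ 3 * (Kg i * (Yh i + Yg i + Yh' i)))|
      ≤ d * (c ^ 3 * (4 * (d * (MP * ρ)) * (d * (d * (MH * (MP * ρ)))
          + d * (d * (MG * (MP' * ρ))))
        + 2 * (d * (MP * MG)) * (d * (d * (ρ * (MP' * ρ))))
        + 2 * (d * (MP * MG)) * (d * (d * (MH * (MP * MG))) + d * (d * (MG * (MP' * MG)))
            + d * (d * (MG * (MP * MH)))))) :=
    absum _ _ herr
  rw [hsplit, hS]
  have hQQ : 4 * lam * c ^ 3 * Kq ^ 2 ≤ 4 * c ^ 3 * lam * Q * Q := by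
    have h1 : Kq ^ 2 ≤ Q * Q := by
      have := mul_le_mul hQ hQ hKq (le_trans hKq hQ)
      calc Kq ^ 2 = Kq * Kq := sq Kq ▸ by ring
        _ ≤ Q * Q := this
    calc 4 * lam * c ^ 3 * Kq ^ 2 ≤ 4 * lam * c ^ 3 * (Q * Q) := by
          refine mul_le_mul_of_nonneg_left h1 (by positivity)
      _ = 4 * c ^ 3 * lam * Q * Q := by ring
  have hrest := neg_abs_le (∑ i, (4 * c * (Kxi i * (Xh i + Xk i)) - 2 * c * (Kg i * Zp i)
      + 2 * c ^ 3 * (Kg i * (Yh i + Yg i + Yh' i))))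
  have := neg_le_neg herrsum
  nlinarith [hQQ]


set_option maxHeartbeats 2000000 in
/-- Let `K` be a uniformly elliptic smooth metric, `ω ⊆ ℝ^d`, and `ψ` a
`C_b^∞` function with `‖∇ψ‖ ≥ α₀ > 0` outside `ω`. For `φ = e^{λψ}` and the Carleman
symbols `q_R, q_I`, there is `λ₀ > 0` such that for all `λ ≥ λ₀` there is `β > 0` with
the Hörmander sub-ellipticity property: `{q_R, q_I}(x,ξ) ≥ β` whenever `x ∉ ω` and
`q_R(x,ξ) = q_I(x,ξ) = 0`. -/
theorem stmt8 {d : ℕ}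
    (K : EuclideanSpace ℝ (Fin d) → Matrix (Fin d) (Fin d) ℝ)
    (hKsymm : ∀ x, (K x).IsSymm)
    (hKsmooth : ∀ i j : Fin d, ContDiff ℝ (⊤ : ℕ∞) fun x => K x i j)
    (hKbdd : ∀ i j : Fin d, ∀ n : ℕ, ∃ C : ℝ,
      ∀ x, ‖iteratedFDeriv ℝ n (fun y => K y i j) x‖ ≤ C)
    (Kinf Ksup : ℝ) (hKinf : 0 < Kinf) (hKK : Kinf ≤ Ksup)
    (hell : ∀ x ξ : EuclideanSpace ℝ (Fin d),
      Kinf * ‖ξ‖ ^ 2 ≤ quadForm K x ξ ∧ quadForm K x ξ ≤ Ksup * ‖ξ‖ ^ 2)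
    (ω : Set (EuclideanSpace ℝ (Fin d)))
    (ψ : EuclideanSpace ℝ (Fin d) → ℝ)
    (hψ : ContDiff ℝ (⊤ : ℕ∞) ψ)
    (hψbdd : ∀ n : ℕ, ∃ C : ℝ, ∀ x, ‖iteratedFDeriv ℝ n ψ x‖ ≤ C)
    (α₀ : ℝ) (hα₀ : 0 < α₀) (hgrad : ∀ x, x ∉ ω → α₀ ≤ ‖gradient ψ x‖) :
    ∃ lam₀ : ℝ, 0 < lam₀ ∧ ∀ lam : ℝ, lam₀ ≤ lam → ∃ β : ℝ, 0 < β ∧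
      ∀ x, x ∉ ω → ∀ ξ : EuclideanSpace ℝ (Fin d),
        carlemanQR K ψ lam x ξ = 0 → carlemanQI K ψ lam x ξ = 0 →
        β ≤ poissonBracket (carlemanQR K ψ lam) (carlemanQI K ψ lam) x ξ := by
  classical
  obtain ⟨C0, hC0⟩ := hψbdd 0
  obtain ⟨C1, hC1⟩ := hψbdd 1
  obtain ⟨C2, hC2⟩ := hψbdd 2
  choose CK hCK using fun (j k : Fin d) => hKbdd j k 1
  set M0 : ℝ := |C0| + 1 with hM0def
  set MG : ℝ := |C1| + 1 with hMGdef
  set MH : ℝ := |C2| + 1 with hMHdef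
  set MP' : ℝ := (∑ j, ∑ k, |CK j k|) + 1 with hMP'def
  set ρ : ℝ := d * MG * Real.sqrt (Ksup / Kinf) with hρdef
  set Kq : ℝ := Kinf * α₀ ^ 2 with hKqdef
  set EE : ℝ := d * (4 * (d * (Ksup * ρ)) * (d * (d * (MH * (Ksup * ρ))) + d * (d * (MG * (MP' * ρ))))
        + 2 * (d * (Ksup * MG)) * (d * (d * (ρ * (MP' * ρ))))
        + 2 * (d * (Ksup * MG)) * (d * (d * (MH * (Ksup * MG))) + d * (d * (MG * (MP' * MG)))
            + d * (d * (MG * (Ksup * MH))))) with hEEdef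
  have hKq0 : 0 < Kq := by rw [hKqdef]; positivity
  have hMG0 : (0:ℝ) ≤ MG := by rw [hMGdef]; positivity
  have hMH0 : (0:ℝ) ≤ MH := by rw [hMHdef]; positivity
  have hMP'0 : (0:ℝ) ≤ MP' := by
    rw [hMP'def]
    have : (0:ℝ) ≤ ∑ j, ∑ k, |CK j k| :=
      Finset.sum_nonneg fun j _ => Finset.sum_nonneg fun k _ => abs_nonneg _
    linarith
  have hρ0 : (0:ℝ) ≤ ρ := by rw [hρdef]; positivity
  have hKsup0 : (0:ℝ) ≤ Ksup := le_trans hKinf.le hKK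
  refine ⟨max 1 ((EE + 1) / (4 * Kq ^ 2)), lt_of_lt_of_le one_pos (le_max_left _ _), ?_⟩
  intro lam hlam
  have hlam1 : (1:ℝ) ≤ lam := le_trans (le_max_left _ _) hlam
  have hlampos : (0:ℝ) < lam := lt_of_lt_of_le one_pos hlam1
  refine ⟨Real.exp (-(3 * (lam * M0))), Real.exp_pos _, ?_⟩
  intro x hx ξ hqR hqI
  have hψd : Differentiable ℝ ψ := hψ.differentiable (by simp)
  have hexp : (0:ℝ) < Real.exp (lam * ψ x) := Real.exp_pos _
  have hcpos : (0:ℝ) < lam * Real.exp (lam * ψ x) := by positivity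
  -- bounds on the data at x
  have hsymx : ∀ j k, K x j k = K x k j := fun j k => ((hKsymm x).apply j k).symm
  have hMPb : ∀ j k, |K x j k| ≤ Ksup :=
    entry_bound K x (hKsymm x) Kinf Ksup hKinf (fun ξ' => hell x ξ')
  have hMGb : ∀ j, |psiG ψ x j| ≤ MG := by
    intro j
    have h := fderiv_apply_bound ψ x (single j 1) C1 (hC1 x)
    rw [EuclideanSpace.norm_single, norm_one, mul_one] at h
    rw [hMGdef]
    calc |psiG ψ x j| = |fderiv ℝ ψ x (single j 1)| := by rw [psiG]
      _ ≤ C1 := h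
      _ ≤ |C1| + 1 := by have := le_abs_self C1; linarith
  have hMHb : ∀ i j, |psiH ψ x i j| ≤ MH := by
    intro i j
    have h := snd_deriv_bound ψ x (single i 1) (single j 1) C2 (hC2 x)
    rw [EuclideanSpace.norm_single, EuclideanSpace.norm_single, norm_one, mul_one, mul_one] at h
    rw [hMHdef]
    calc |psiH ψ x i j| = |fderiv ℝ (fderiv ℝ ψ) x (single i 1) (single j 1)| := by rw [psiH]
      _ ≤ C2 := h
      _ ≤ |C2| + 1 := by have := le_abs_self C2; linarith
  have hMP'b : ∀ i j k, |KDer K x i j k| ≤ MP' := by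
    intro i j k
    have h := fderiv_apply_bound (fun y => K y j k) x (single i 1) (CK j k) (hCK j k x)
    rw [EuclideanSpace.norm_single, norm_one, mul_one] at h
    rw [hMP'def]
    calc |KDer K x i j k| = |fderiv ℝ (fun y => K y j k) x (single i 1)| := by rw [KDer]
      _ ≤ CK j k := h
      _ ≤ |CK j k| := le_abs_self _
      _ ≤ ∑ k', |CK j k'| := Finset.single_le_sum (f := fun k' => |CK j k'|) (fun _ _ => abs_nonneg _) (Finset.mem_univ k)
      _ ≤ ∑ j', ∑ k', |CK j' k'| := Finset.single_le_sum
          (f := fun j' => ∑ k', |CK j' k'|)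
          (fun _ _ => Finset.sum_nonneg fun _ _ => abs_nonneg _) (Finset.mem_univ j)
      _ ≤ (∑ j', ∑ k', |CK j' k'|) + 1 := by linarith
  -- the gradient components of the weight
  have haj : ∀ j, |gradient (carlemanWeight ψ lam) x j|
      ≤ (lam * Real.exp (lam * ψ x)) * MG := by
    intro j
    rw [gradW_coord' ψ hψ lam x j]
    have : |lam * Real.exp (lam * ψ x) * fderiv ℝ ψ x (single j 1)|
        = (lam * Real.exp (lam * ψ x)) * |fderiv ℝ ψ x (single j 1)| := by
      rw [abs_mul, abs_of_nonneg hcpos.le]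
    rw [this]
    have hG := hMGb j
    rw [show psiG ψ x j = fderiv ℝ ψ x (single j 1) from rfl] at hG
    exact mul_le_mul_of_nonneg_left hG hcpos.le
  -- |ξ k| ≤ c * ρ
  have hquadeq : quadForm K x ξ = quadForm K x (gradient (carlemanWeight ψ lam) x) :=
    sub_eq_zero.mp hqR
  have hquadbound : quadForm K x (gradient (carlemanWeight ψ lam) x)
      ≤ d * (d * (((lam * Real.exp (lam * ψ x)) * MG) * (Ksup *
        ((lam * Real.exp (lam * ψ x)) * MG)))) := by
    refine le_trans (le_abs_self _) ?_
    exact absum2 _ _ (fun j k => mulbound (mulbound (haj j) (hMPb j k)) (haj k))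
      |>.trans_eq (by ring_nf)
  have hxinorm : ‖ξ‖ ≤ (lam * Real.exp (lam * ψ x)) * ρ := by
    have h1 : Kinf * ‖ξ‖ ^ 2 ≤ quadForm K x ξ := (hell x ξ).1
    have h2 : Kinf * ((lam * Real.exp (lam * ψ x)) * ρ) ^ 2
        = d * (d * (((lam * Real.exp (lam * ψ x)) * MG) * (Ksup *
          ((lam * Real.exp (lam * ψ x)) * MG)))) := by
      rw [hρdef]
      rw [mul_pow, mul_pow, mul_pow, Real.sq_sqrt (by positivity)]
      field_simp
    have h3 : Kinf * ‖ξ‖ ^ 2 ≤ Kinf * ((lam * Real.exp (lam * ψ x)) * ρ) ^ 2 := by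
      rw [h2]
      exact le_trans h1 (hquadeq ▸ hquadbound)
    have h4 : ‖ξ‖ ^ 2 ≤ ((lam * Real.exp (lam * ψ x)) * ρ) ^ 2 :=
      le_of_mul_le_mul_left h3 hKinf
    calc ‖ξ‖ = Real.sqrt (‖ξ‖ ^ 2) := by rw [Real.sqrt_sq (norm_nonneg _)]
      _ ≤ Real.sqrt (((lam * Real.exp (lam * ψ x)) * ρ) ^ 2) := Real.sqrt_le_sqrt h4
      _ = (lam * Real.exp (lam * ψ x)) * ρ := Real.sqrt_sq (by positivity)
  have hxib : ∀ k, |ξ k| ≤ (lam * Real.exp (lam * ψ x)) * ρ :=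
    fun k => le_trans (coord_le_norm ξ k) hxinorm
  -- S = 0
  have hSS : ∑ i, ∑ j, gradient (carlemanWeight ψ lam) x i * K x i j * ξ j
      = (lam * Real.exp (lam * ψ x)) * ∑ i, ∑ j, psiG ψ x i * (K x i j * ξ j) := by
    simp only [Finset.mul_sum]
    refine Finset.sum_congr rfl fun i _ => Finset.sum_congr rfl fun j _ => ?_
    rw [gradW_coord' ψ hψ lam x i, show psiG ψ x i = fderiv ℝ ψ x (single i 1) from rfl]
    ring
  have hS : ∑ j, ∑ k, psiG ψ x j * (K x j k * ξ k) = 0 := by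
    have h := hqI
    rw [carlemanQI, hSS] at h
    rcases mul_eq_zero.mp h with h' | h'
    · norm_num at h'
    · rcases mul_eq_zero.mp h' with h'' | h''
      · exact absurd h'' (ne_of_gt hcpos)
      · exact h''
  -- Q ≥ Kq
  have hQform : ∑ j, ∑ k, psiG ψ x j * (K x j k * psiG ψ x k) = quadForm K x (gradient ψ x) := by
    rw [quadForm]
    refine Finset.sum_congr rfl fun j _ => Finset.sum_congr rfl fun k _ => ?_
    rw [grad_coord ψ x j, grad_coord ψ x k,
      show psiG ψ x j = fderiv ℝ ψ x (single j 1) from rfl,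
      show psiG ψ x k = fderiv ℝ ψ x (single k 1) from rfl]
    ring
  have hQ : Kq ≤ ∑ j, ∑ k, psiG ψ x j * (K x j k * psiG ψ x k) := by
    rw [hQform, hKqdef]
    have h1 : Kinf * ‖gradient ψ x‖ ^ 2 ≤ quadForm K x (gradient ψ x) := (hell x _).1
    have h2 : α₀ ^ 2 ≤ ‖gradient ψ x‖ ^ 2 := pow_le_pow_left₀ hα₀.le (hgrad x hx) 2
    calc Kinf * α₀ ^ 2 ≤ Kinf * ‖gradient ψ x‖ ^ 2 := mul_le_mul_of_nonneg_left h2 hKinf.le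
      _ ≤ quadForm K x (gradient ψ x) := h1
  -- the four derivative identities
  have hA : ∀ i, fderiv ℝ (carlemanQR K ψ lam x) ξ (single i 1) = 2 * ∑ k, K x i k * ξ k := by
    intro i
    rw [show carlemanQR K ψ lam x = fun y : EuclideanSpace ℝ (Fin d) => (∑ j, ∑ k, y j * K x j k * y k)
        - quadForm K x (gradient (carlemanWeight ψ lam) x) from rfl]
    exact quad_sub_fderiv_single (fun j k => K x j k) hsymx _ ξ i
  have hB : ∀ i, fderiv ℝ (carlemanQI K ψ lam x) ξ (single i 1)
      = 2 * ∑ j, lam * Real.exp (lam * ψ x) * psiG ψ x j * K x j i := by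
    intro i
    rw [show carlemanQI K ψ lam x = fun y : EuclideanSpace ℝ (Fin d) => 2 * ∑ j, ∑ k,
        (fun j => gradient (carlemanWeight ψ lam) x j) j * K x j k * y k from rfl]
    rw [qI_fderiv_xi K (fun j => gradient (carlemanWeight ψ lam) x j) x ξ i]
    congr 1
    refine Finset.sum_congr rfl fun j _ => ?_
    rw [gradW_coord' ψ hψ lam x j, show psiG ψ x j = fderiv ℝ ψ x (single j 1) from rfl]
  have hCfun : (fun x' => carlemanQI K ψ lam x' ξ) = fun y => 2 * ∑ j, ∑ k,
      (lam * Real.exp (lam * ψ y) * fderiv ℝ ψ y (single j 1)) * K y j k * ξ k := by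
    funext y
    rw [carlemanQI]
    congr 1
    refine Finset.sum_congr rfl fun j _ => Finset.sum_congr rfl fun k _ => ?_
    rw [gradW_coord' ψ hψ lam y j]
  have hC : ∀ i, fderiv ℝ (fun x' => carlemanQI K ψ lam x' ξ) x (single i 1)
      = 2 * ∑ j, ∑ k,
        ((lam * Real.exp (lam * ψ x) * (lam * psiG ψ x i * psiG ψ x j + psiH ψ x i j)) * K x j k
          + (lam * Real.exp (lam * ψ x) * psiG ψ x j) * KDer K x i j k) * ξ k := by
    intro i
    rw [hCfun]
    exact qI_fderiv_x K hKsmooth ψ hψ lam x ξ i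
  have hDfun : (fun x' => carlemanQR K ψ lam x' ξ) = fun y =>
      (∑ j, ∑ k, ξ j * K y j k * ξ k)
        - ∑ j, ∑ k, (lam * Real.exp (lam * ψ y) * fderiv ℝ ψ y (single j 1)) * K y j k *
            (lam * Real.exp (lam * ψ y) * fderiv ℝ ψ y (single k 1)) := by
    funext y
    rw [carlemanQR, quadForm, quadForm]
    congr 1
    refine Finset.sum_congr rfl fun j _ => Finset.sum_congr rfl fun k _ => ?_
    rw [gradW_coord' ψ hψ lam y j, gradW_coord' ψ hψ lam y k]
  have hD : ∀ i, fderiv ℝ (fun x' => carlemanQR K ψ lam x' ξ) x (single i 1)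
      = (∑ j, ∑ k, ξ j * KDer K x i j k * ξ k)
        - ∑ j, ∑ k,
          ((lam * Real.exp (lam * ψ x) * (lam * psiG ψ x i * psiG ψ x j + psiH ψ x i j)) *
              K x j k * (lam * Real.exp (lam * ψ x) * psiG ψ x k)
            + (lam * Real.exp (lam * ψ x) * psiG ψ x j) * KDer K x i j k *
              (lam * Real.exp (lam * ψ x) * psiG ψ x k)
            + (lam * Real.exp (lam * ψ x) * psiG ψ x j) * K x j k *
              (lam * Real.exp (lam * ψ x) * (lam * psiG ψ x i * psiG ψ x k + psiH ψ x i k))) := by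
    intro i
    rw [hDfun]
    exact qR_fderiv_x K hKsmooth ψ hψ lam x ξ i
  -- apply the core estimate
  have hcore := core (fun j k => K x j k) (KDer K x) (psiG ψ x) (psiH ψ x) (fun k => ξ k)
    (fun i => fderiv ℝ (carlemanQR K ψ lam x) ξ (single i 1))
    (fun i => fderiv ℝ (carlemanQI K ψ lam x) ξ (single i 1))
    (fun i => fderiv ℝ (fun x' => carlemanQI K ψ lam x' ξ) x (single i 1))
    (fun i => fderiv ℝ (fun x' => carlemanQR K ψ lam x' ξ) x (single i 1))
    (lam * Real.exp (lam * ψ x)) lam Ksup MP' MG MH ρ Kq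
    hsymx hMPb hMP'b hMGb hMHb hxib hcpos.le hlampos.le hρ0 hKq0.le
    hKsup0 hMP'0 hMG0 hMH0 hA hB hC hD hS hQ
  have hbr : poissonBracket (carlemanQR K ψ lam) (carlemanQI K ψ lam) x ξ
      = ∑ i, (fderiv ℝ (carlemanQR K ψ lam x) ξ (single i 1) *
          fderiv ℝ (fun x' => carlemanQI K ψ lam x' ξ) x (single i 1) -
        fderiv ℝ (fun x' => carlemanQR K ψ lam x' ξ) x (single i 1) *
          fderiv ℝ (carlemanQI K ψ lam x) ξ (single i 1)) := rfl
  rw [hbr]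
  refine le_trans ?_ hcore
  -- numeric endgame
  have hEEfold : d * (4 * (d * (Ksup * ρ)) * (d * (d * (MH * (Ksup * ρ)))
        + d * (d * (MG * (MP' * ρ))))
      + 2 * (d * (Ksup * MG)) * (d * (d * (ρ * (MP' * ρ))))
      + 2 * (d * (Ksup * MG)) * (d * (d * (MH * (Ksup * MG))) + d * (d * (MG * (MP' * MG)))
          + d * (d * (MG * (Ksup * MH))))) = EE := by rw [hEEdef]
  rw [hEEfold]
  have hlamEE : EE + 1 ≤ 4 * lam * Kq ^ 2 := by
    have h := le_trans (le_max_right 1 ((EE + 1) / (4 * Kq ^ 2))) hlam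
    have h4 : (0:ℝ) < 4 * Kq ^ 2 := by positivity
    rw [div_le_iff₀ h4] at h
    nlinarith
  have hpsix : -M0 ≤ ψ x := by
    have habs : |ψ x| ≤ C0 := by
      have h := hC0 x
      rwa [norm_iteratedFDeriv_zero, Real.norm_eq_abs] at h
    rw [hM0def]
    have h1 := (abs_le.mp habs).1
    have h2 := le_abs_self C0
    linarith
  have hc3 : Real.exp (-(3 * (lam * M0))) ≤ (lam * Real.exp (lam * ψ x)) ^ 3 := by
    have h1 : Real.exp (-(3 * (lam * M0))) ≤ Real.exp (lam * ψ x) ^ 3 := by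
      rw [← Real.exp_nat_mul]
      push_cast
      apply Real.exp_le_exp.mpr
      nlinarith [mul_nonneg hlampos.le (by linarith : (0:ℝ) ≤ ψ x + M0)]
    calc Real.exp (-(3 * (lam * M0))) ≤ Real.exp (lam * ψ x) ^ 3 := h1
      _ ≤ lam ^ 3 * Real.exp (lam * ψ x) ^ 3 := by
          have hl3 : (1:ℝ) ≤ lam ^ 3 := one_le_pow₀ hlam1
          nlinarith [pow_pos hexp 3]
      _ = (lam * Real.exp (lam * ψ x)) ^ 3 := by rw [mul_pow]
  calc Real.exp (-(3 * (lam * M0))) ≤ (lam * Real.exp (lam * ψ x)) ^ 3 := hc3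
    _ ≤ (lam * Real.exp (lam * ψ x)) ^ 3 * (4 * lam * Kq ^ 2 - EE) := by
        nlinarith [pow_pos hcpos 3]
    _ = 4 * lam * (lam * Real.exp (lam * ψ x)) ^ 3 * Kq ^ 2
        - (lam * Real.exp (lam * ψ x)) ^ 3 * EE := by ring
end

section
/- Let K : ℝ^d → M_d(ℝ) be a uniformly elliptic smooth metric, let ω ⊆ ℝ^d, and let ψ : ℝ^d → ℝ be of class C_b^∞ with a constant α₀ > 0 such that ‖∇ψ(x)‖ ≥ α₀ for all x ∉ ω. For λ > 0 set φ = e^{λψ}, q_R(x,ξ) = ξᵀK(x)ξ − ∇φ(x)ᵀK(x)∇φ(x) and q_I(x,ξ) = 2∇φ(x)ᵀK(x)ξ. Then there exists λ₀ > 0 such that for every λ ≥ λ₀ there exist η > 0 and c > 0 with: for all x ∈ ℝ^d \ ω and all ξ ∈ ℝ^d, η·(q_R(x,ξ)² + q_I(x,ξ)²) + {q_R, q_I}(x,ξ) ≥ c·(1 + ‖ξ‖²)². -/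
section Aux
variable {d : ℕ}
local notation "E" => EuclideanSpace ℝ (Fin d)

lemma aux_coord_le_norm (ξ : E) (i : Fin d) : |ξ i| ≤ ‖ξ‖ := by
  rw [EuclideanSpace.norm_eq]
  have h1 : |ξ i| = Real.sqrt (‖ξ i‖^2) := by
    rw [Real.sqrt_sq_eq_abs, Real.norm_eq_abs, abs_abs]
  rw [h1]
  exact Real.sqrt_le_sqrt <| Finset.single_le_sum (f := fun j => ‖ξ j‖^2)
    (fun j _ => by positivity) (Finset.mem_univ i)

lemma aux_grad_coord (f : E → ℝ) (x : E) (i : Fin d) :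
    gradient f x i = fderiv ℝ f x (EuclideanSpace.single i 1) := by
  have h1 : gradient f x i = inner ℝ (gradient f x) (EuclideanSpace.single i (1:ℝ)) := by
    rw [EuclideanSpace.inner_single_right]; simp
  rw [h1, gradient, InnerProductSpace.toDual_symm_apply]

lemma aux_norm_grad (f : E → ℝ) (x : E) : ‖gradient f x‖ = ‖fderiv ℝ f x‖ := by
  rw [gradient]; exact LinearIsometryEquiv.norm_map _ _

lemma aux_norm_fderiv_eq {F : Type*} [NormedAddCommGroup F] [NormedSpace ℝ F]
    (f : E → F) (x : E) : ‖fderiv ℝ f x‖ = ‖iteratedFDeriv ℝ 1 f x‖ := by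
  rw [← norm_iteratedFDeriv_fderiv (n := 0), norm_iteratedFDeriv_zero]

lemma aux_dirDeriv (f : E → ℝ) {x : E} (hf : DifferentiableAt ℝ f x) (v : E) :
    HasDerivAt (fun t : ℝ => f (x + t • v)) (fderiv ℝ f x v) 0 := by
  have hline : HasDerivAt (fun t : ℝ => x + t • v) v 0 := by
    simpa using ((hasDerivAt_id (0:ℝ)).smul_const v).const_add x
  have h0 : x + (0:ℝ) • v = x := by simp
  have h2 : HasFDerivAt f (fderiv ℝ f x) (x + (0:ℝ) • v) := by rw [h0]; exact hf.hasFDerivAt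
  exact h2.comp_hasDerivAt 0 hline

lemma aux_gradCW (ψ : E → ℝ) (hψ : ContDiff ℝ (⊤ : ℕ∞) ψ) (lam : ℝ) (y : E) :
    gradient (carlemanWeight ψ lam) y = (lam * Real.exp (lam * ψ y)) • gradient ψ y := by
  have hd : DifferentiableAt ℝ ψ y := (hψ.differentiable (by norm_cast)) y
  have h1 : HasFDerivAt (carlemanWeight ψ lam)
      ((lam * Real.exp (lam * ψ y)) • fderiv ℝ ψ y) y := by
    have := (Real.hasDerivAt_exp (lam * ψ y)).comp_hasFDerivAt y (hd.hasFDerivAt.const_mul lam)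
    have e : (lam * Real.exp (lam * ψ y)) • fderiv ℝ ψ y
        = Real.exp (lam * ψ y) • lam • fderiv ℝ ψ y := by rw [smul_smul]; congr 1; ring
    rw [e]; exact this
  have h2 : HasGradientAt (carlemanWeight ψ lam)
      ((lam * Real.exp (lam * ψ y)) • gradient ψ y) y := by
    rw [hasGradientAt_iff_hasFDerivAt]
    have h3 : (InnerProductSpace.toDual ℝ _) ((lam * Real.exp (lam * ψ y)) • gradient ψ y)
        = (lam * Real.exp (lam * ψ y)) • (InnerProductSpace.toDual ℝ _) (gradient ψ y) := by simp
    have hg : (InnerProductSpace.toDual ℝ _) (gradient ψ y) = fderiv ℝ ψ y := by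
      rw [gradient, LinearIsometryEquiv.apply_symm_apply]
    rw [h3, hg]; exact h1
  exact h2.gradient

lemma aux_coord_diff (j : Fin d) : Differentiable ℝ (fun ξ' : E => ξ' j) :=
  by fun_prop

-- derivative in ξ of the quadratic form
lemma aux_fderiv_quad (A : Fin d → Fin d → ℝ) (ξ : E) (i : Fin d) :
    fderiv ℝ (fun ξ' : E => ∑ j, ∑ k, ξ' j * A j k * ξ' k) ξ (EuclideanSpace.single i 1)
      = (∑ k, A i k * ξ k) + ∑ j, ξ j * A j i := by
  have hdiff : DifferentiableAt ℝ (fun ξ' : E => ∑ j, ∑ k, ξ' j * A j k * ξ' k) ξ := by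
    apply Differentiable.differentiableAt
    apply Differentiable.fun_sum; intro j _
    apply Differentiable.fun_sum; intro k _
    exact ((aux_coord_diff j).mul_const (A j k)).mul (aux_coord_diff k)
  have h2 := aux_dirDeriv _ hdiff (EuclideanSpace.single i 1)
  set e : E := EuclideanSpace.single i 1 with he
  have hfun : (fun t : ℝ => ∑ j, ∑ k, (ξ + t • e) j * A j k * (ξ + t • e) k)
      = fun t : ℝ => ∑ j, ∑ k, (ξ j + t * e j) * A j k * (ξ k + t * e k) := by
    funext t
    refine Finset.sum_congr rfl fun j _ => Finset.sum_congr rfl fun k _ => ?_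
    simp [PiLp.add_apply, PiLp.smul_apply, smul_eq_mul]
  rw [hfun] at h2
  have h3 : HasDerivAt (fun t : ℝ => ∑ j, ∑ k, (ξ j + t * e j) * A j k * (ξ k + t * e k))
      (∑ j, ∑ k, ((1 * e j * A j k) * (ξ k + 0 * e k) + (ξ j + 0 * e j) * A j k * (1 * e k))) 0 := by
    apply HasDerivAt.fun_sum; intro j _
    apply HasDerivAt.fun_sum; intro k _
    have hu : HasDerivAt (fun t : ℝ => ξ j + t * e j) (1 * e j) 0 :=
      ((hasDerivAt_id (0:ℝ)).mul_const (e j)).const_add (ξ j)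
    have hv : HasDerivAt (fun t : ℝ => ξ k + t * e k) (1 * e k) 0 :=
      ((hasDerivAt_id (0:ℝ)).mul_const (e k)).const_add (ξ k)
    exact (hu.mul_const (A j k)).mul hv
  have h4 := h2.unique h3
  rw [h4, he]
  simp only [EuclideanSpace.single_apply, one_mul, zero_mul, add_zero, mul_ite, mul_zero,
    mul_one, ite_mul, zero_mul]
  simp only [ite_self, add_zero, Finset.sum_add_distrib]
  congr 1
  · rw [Finset.sum_comm]
    simp [Finset.sum_ite_eq']
  · simp [Finset.sum_ite_eq']
end Aux

section Aux2
variable {d : ℕ}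
local notation "E" => EuclideanSpace ℝ (Fin d)
local notation "ee" i => (EuclideanSpace.single i (1:ℝ) : EuclideanSpace ℝ (Fin d))

-- ξ-derivative of the linear-in-ξ symbol q_I(x, ·)
lemma aux_fderiv_lin (g : Fin d → ℝ) (A : Fin d → Fin d → ℝ) (ξ : E) (i : Fin d) :
    fderiv ℝ (fun ξ' : E => 2 * ∑ j, ∑ k, g j * A j k * ξ' k) ξ (EuclideanSpace.single i 1)
      = 2 * ∑ j, g j * A j i := by
  have hdiff : DifferentiableAt ℝ (fun ξ' : E => 2 * ∑ j, ∑ k, g j * A j k * ξ' k) ξ := by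
    apply Differentiable.differentiableAt
    apply Differentiable.const_mul
    apply Differentiable.fun_sum; intro j _
    apply Differentiable.fun_sum; intro k _
    exact (aux_coord_diff k).const_mul (g j * A j k)
  have h2 := aux_dirDeriv _ hdiff (EuclideanSpace.single i 1)
  set e : E := EuclideanSpace.single i 1 with he
  have h3 : HasDerivAt (fun t : ℝ => 2 * ∑ j, ∑ k, g j * A j k * (ξ k + t * e k))
      (2 * ∑ j, ∑ k, g j * A j k * (1 * e k)) 0 := by
    apply HasDerivAt.const_mul
    apply HasDerivAt.fun_sum; intro j _
    apply HasDerivAt.fun_sum; intro k _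
    exact (((hasDerivAt_id (0:ℝ)).mul_const (e k)).const_add (ξ k)).const_mul (g j * A j k)
  have h4 := h2.unique h3
  rw [h4, he]
  congr 1
  rw [Finset.sum_congr rfl (fun j (_ : j ∈ Finset.univ) => by
    simp only [EuclideanSpace.single_apply, one_mul, mul_ite, mul_zero, mul_one]
    exact Finset.sum_ite_eq' Finset.univ i (fun k => g j * A j k))]
  simp

end Aux2

section Aux3
variable {d : ℕ}
local notation "E" => EuclideanSpace ℝ (Fin d)

lemma aux_fderiv_QI_x (K : E → Matrix (Fin d) (Fin d) ℝ)
    (hK : ∀ i j : Fin d, ContDiff ℝ (⊤ : ℕ∞) fun x => K x i j)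
    (ψ : E → ℝ) (hψ : ContDiff ℝ (⊤ : ℕ∞) ψ) (lam : ℝ) (ξ x : E) (i : Fin d) :
    fderiv ℝ (fun x' => carlemanQI K ψ lam x' ξ) x (EuclideanSpace.single i 1)
      = 2 * ∑ j, ∑ k,
        (((lam * Real.exp (lam * ψ x) * (lam * fderiv ℝ ψ x (EuclideanSpace.single i 1)))
            * fderiv ℝ ψ x (EuclideanSpace.single j 1)
          + (lam * Real.exp (lam * ψ x))
            * fderiv ℝ (fun y => fderiv ℝ ψ y (EuclideanSpace.single j 1)) x
                (EuclideanSpace.single i 1))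
          * K x j k
        + (lam * Real.exp (lam * ψ x) * fderiv ℝ ψ x (EuclideanSpace.single j 1))
            * fderiv ℝ (fun y => K y j k) x (EuclideanSpace.single i 1)) * ξ k := by
  have hψd : Differentiable ℝ ψ := hψ.differentiable (by norm_cast)
  have hfd : ContDiff ℝ (⊤:ℕ∞) (fderiv ℝ ψ) := hψ.fderiv_right (by norm_cast)
  have hB : ∀ j : Fin d, Differentiable ℝ (fun y : E => fderiv ℝ ψ y (EuclideanSpace.single j 1)) :=
    fun j => (hfd.clm_apply contDiff_const).differentiable (by norm_cast)
  have hs : Differentiable ℝ (fun y : E => lam * Real.exp (lam * ψ y)) :=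
    ((hψd.const_mul lam).exp).const_mul lam
  have hKd : ∀ j k : Fin d, Differentiable ℝ (fun y => K y j k) :=
    fun j k => (hK j k).differentiable (by norm_cast)
  have hfun : (fun x' => carlemanQI K ψ lam x' ξ)
      = fun x' => 2 * ∑ j, ∑ k, ((lam * Real.exp (lam * ψ x'))
          * fderiv ℝ ψ x' (EuclideanSpace.single j 1)) * K x' j k * ξ k := by
    funext y
    simp only [carlemanQI]
    congr 1
    refine Finset.sum_congr rfl fun j _ => Finset.sum_congr rfl fun k _ => ?_
    rw [aux_gradCW ψ hψ lam y]
    simp only [PiLp.smul_apply, smul_eq_mul, aux_grad_coord]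
  rw [hfun]
  have hdiffF : DifferentiableAt ℝ (fun x' => 2 * ∑ j, ∑ k, ((lam * Real.exp (lam * ψ x'))
      * fderiv ℝ ψ x' (EuclideanSpace.single j 1)) * K x' j k * ξ k) x := by
    apply Differentiable.differentiableAt
    apply Differentiable.const_mul
    apply Differentiable.fun_sum; intro j _
    apply Differentiable.fun_sum; intro k _
    exact ((hs.mul (hB j)).mul (hKd j k)).mul_const (ξ k)
  have h2 := aux_dirDeriv _ hdiffF (EuclideanSpace.single i 1)
  set e : E := EuclideanSpace.single i 1
  have hψl : HasDerivAt (fun t : ℝ => ψ (x + t • e)) (fderiv ℝ ψ x e) 0 := aux_dirDeriv ψ (hψd x) e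
  have hsl : HasDerivAt (fun t : ℝ => lam * Real.exp (lam * ψ (x + t • e)))
      (lam * (Real.exp (lam * ψ x) * (lam * fderiv ℝ ψ x e))) 0 := by
    have h := ((hψl.const_mul lam).exp).const_mul lam
    simpa using h
  have hBl : ∀ j : Fin d,
      HasDerivAt (fun t : ℝ => fderiv ℝ ψ (x + t • e) (EuclideanSpace.single j 1))
      (fderiv ℝ (fun y => fderiv ℝ ψ y (EuclideanSpace.single j 1)) x e) 0 :=
    fun j => aux_dirDeriv _ ((hB j) x) e
  have hal : ∀ j k : Fin d, HasDerivAt (fun t : ℝ => K (x + t • e) j k)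
      (fderiv ℝ (fun y => K y j k) x e) 0 := fun j k => aux_dirDeriv _ ((hKd j k) x) e
  have h3 := HasDerivAt.const_mul (2:ℝ) (HasDerivAt.fun_sum fun j (_ : j ∈ Finset.univ) =>
    HasDerivAt.fun_sum fun k (_ : k ∈ Finset.univ) =>
      ((hsl.mul (hBl j)).mul (hal j k)).mul_const (ξ k))
  have h4 := h2.unique h3
  rw [h4]
  simp only [Pi.mul_apply, zero_smul, add_zero]
  congr 1
  refine Finset.sum_congr rfl fun j _ => Finset.sum_congr rfl fun k _ => ?_
  ring

lemma aux_fderiv_QR_x (K : E → Matrix (Fin d) (Fin d) ℝ)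
    (hK : ∀ i j : Fin d, ContDiff ℝ (⊤ : ℕ∞) fun x => K x i j)
    (ψ : E → ℝ) (hψ : ContDiff ℝ (⊤ : ℕ∞) ψ) (lam : ℝ) (ξ x : E) (i : Fin d) :
    fderiv ℝ (fun x' => carlemanQR K ψ lam x' ξ) x (EuclideanSpace.single i 1)
      = (∑ j, ∑ k, fderiv ℝ (fun y => K y j k) x (EuclideanSpace.single i 1) * ξ j * ξ k)
        - ∑ j, ∑ k,
          ((((lam * Real.exp (lam * ψ x) * (lam * fderiv ℝ ψ x (EuclideanSpace.single i 1)))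
              * fderiv ℝ ψ x (EuclideanSpace.single j 1)
            + (lam * Real.exp (lam * ψ x))
              * fderiv ℝ (fun y => fderiv ℝ ψ y (EuclideanSpace.single j 1)) x
                  (EuclideanSpace.single i 1)) * K x j k
            + (lam * Real.exp (lam * ψ x) * fderiv ℝ ψ x (EuclideanSpace.single j 1))
              * fderiv ℝ (fun y => K y j k) x (EuclideanSpace.single i 1))
            * (lam * Real.exp (lam * ψ x) * fderiv ℝ ψ x (EuclideanSpace.single k 1))
          + (lam * Real.exp (lam * ψ x) * fderiv ℝ ψ x (EuclideanSpace.single j 1)) * K x j k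
            * ((lam * Real.exp (lam * ψ x) * (lam * fderiv ℝ ψ x (EuclideanSpace.single i 1)))
                * fderiv ℝ ψ x (EuclideanSpace.single k 1)
              + (lam * Real.exp (lam * ψ x))
                * fderiv ℝ (fun y => fderiv ℝ ψ y (EuclideanSpace.single k 1)) x
                    (EuclideanSpace.single i 1))) := by
  have hψd : Differentiable ℝ ψ := hψ.differentiable (by norm_cast)
  have hfd : ContDiff ℝ (⊤:ℕ∞) (fderiv ℝ ψ) := hψ.fderiv_right (by norm_cast)
  have hB : ∀ j : Fin d, Differentiable ℝ (fun y : E => fderiv ℝ ψ y (EuclideanSpace.single j 1)) :=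
    fun j => (hfd.clm_apply contDiff_const).differentiable (by norm_cast)
  have hs : Differentiable ℝ (fun y : E => lam * Real.exp (lam * ψ y)) :=
    ((hψd.const_mul lam).exp).const_mul lam
  have hKd : ∀ j k : Fin d, Differentiable ℝ (fun y => K y j k) :=
    fun j k => (hK j k).differentiable (by norm_cast)
  have hfun : (fun x' => carlemanQR K ψ lam x' ξ)
      = fun x' => (∑ j, ∑ k, ξ j * K x' j k * ξ k)
          - ∑ j, ∑ k, ((lam * Real.exp (lam * ψ x')) * fderiv ℝ ψ x' (EuclideanSpace.single j 1))
              * K x' j k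
              * ((lam * Real.exp (lam * ψ x')) * fderiv ℝ ψ x' (EuclideanSpace.single k 1)) := by
    funext y
    simp only [carlemanQR, quadForm]
    congr 1
    refine Finset.sum_congr rfl fun j _ => Finset.sum_congr rfl fun k _ => ?_
    rw [aux_gradCW ψ hψ lam y]
    simp only [PiLp.smul_apply, smul_eq_mul, aux_grad_coord]
  rw [hfun]
  have hd1 : Differentiable ℝ (fun x' => (∑ j, ∑ k, ξ j * K x' j k * ξ k) : E → ℝ) := by
    apply Differentiable.fun_sum; intro j _
    apply Differentiable.fun_sum; intro k _
    exact ((hKd j k).const_mul (ξ j)).mul_const (ξ k)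
  have hd2 : Differentiable ℝ (fun x' : EuclideanSpace ℝ (Fin d) =>
      ∑ j, ∑ k, ((lam * Real.exp (lam * ψ x')) * fderiv ℝ ψ x' (EuclideanSpace.single j 1))
        * K x' j k
        * ((lam * Real.exp (lam * ψ x')) * fderiv ℝ ψ x' (EuclideanSpace.single k 1))) := by
    apply Differentiable.fun_sum; intro j _
    apply Differentiable.fun_sum; intro k _
    exact ((hs.mul (hB j)).mul (hKd j k)).mul (hs.mul (hB k))
  have h2 := aux_dirDeriv _ (((hd1.fun_sub hd2)).differentiableAt (x := x)) (EuclideanSpace.single i 1)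
  set e : E := EuclideanSpace.single i 1
  have hψl : HasDerivAt (fun t : ℝ => ψ (x + t • e)) (fderiv ℝ ψ x e) 0 := aux_dirDeriv ψ (hψd x) e
  have hsl : HasDerivAt (fun t : ℝ => lam * Real.exp (lam * ψ (x + t • e)))
      (lam * (Real.exp (lam * ψ x) * (lam * fderiv ℝ ψ x e))) 0 := by
    have h := ((hψl.const_mul lam).exp).const_mul lam
    simpa using h
  have hBl : ∀ j : Fin d,
      HasDerivAt (fun t : ℝ => fderiv ℝ ψ (x + t • e) (EuclideanSpace.single j 1))
      (fderiv ℝ (fun y => fderiv ℝ ψ y (EuclideanSpace.single j 1)) x e) 0 :=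
    fun j => aux_dirDeriv _ ((hB j) x) e
  have hal : ∀ j k : Fin d, HasDerivAt (fun t : ℝ => K (x + t • e) j k)
      (fderiv ℝ (fun y => K y j k) x e) 0 := fun j k => aux_dirDeriv _ ((hKd j k) x) e
  have h3 := HasDerivAt.fun_sub
    (HasDerivAt.fun_sum fun j (_ : j ∈ Finset.univ) => HasDerivAt.fun_sum fun k (_ : k ∈ Finset.univ) =>
      ((hal j k).const_mul (ξ j)).mul_const (ξ k))
    (HasDerivAt.fun_sum fun j (_ : j ∈ Finset.univ) => HasDerivAt.fun_sum fun k (_ : k ∈ Finset.univ) =>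
      ((hsl.mul (hBl j)).mul (hal j k)).mul (hsl.mul (hBl k)))
  have h4 := h2.unique h3
  rw [h4]
  simp only [Pi.mul_apply, zero_smul, add_zero]
  congr 1
  · refine Finset.sum_congr rfl fun j _ => Finset.sum_congr rfl fun k _ => ?_
    ring
  · refine Finset.sum_congr rfl fun j _ => Finset.sum_congr rfl fun k _ => ?_
    ring

end Aux3

section Aux4
variable {d : ℕ}
local notation "E" => EuclideanSpace ℝ (Fin d)

lemma aux_abs_sum_le (f : Fin d → ℝ) (C : ℝ) (h : ∀ j, |f j| ≤ C) :
    |∑ j, f j| ≤ (d : ℝ) * C := by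
  calc |∑ j, f j| ≤ ∑ j, |f j| := Finset.abs_sum_le_sum_abs _ _
    _ ≤ ∑ _j : Fin d, C := Finset.sum_le_sum fun j _ => h j
    _ = (d : ℝ) * C := by simp [Finset.sum_const, nsmul_eq_mul]

lemma aux_abs_sum2_le (f : Fin d → Fin d → ℝ) (C : ℝ) (h : ∀ j k, |f j k| ≤ C)
    (hC : 0 ≤ C) : |∑ j, ∑ k, f j k| ≤ (d : ℝ)^2 * C := by
  have h1 := aux_abs_sum_le (fun j => ∑ k, f j k) ((d : ℝ) * C)
    (fun j => aux_abs_sum_le (f j) C (h j))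
  calc |∑ j, ∑ k, f j k| ≤ (d : ℝ) * ((d : ℝ) * C) := h1
    _ = (d : ℝ)^2 * C := by ring

lemma aux_opnorm_single (f : (EuclideanSpace ℝ (Fin d)) →L[ℝ] ℝ) (i : Fin d) :
    |f (EuclideanSpace.single i 1)| ≤ ‖f‖ := by
  have h := f.le_opNorm (EuclideanSpace.single i 1)
  rw [EuclideanSpace.norm_single] at h
  simpa using h

lemma aux_fderiv_fderiv (ψ : E → ℝ) (hψ : ContDiff ℝ (⊤ : ℕ∞) ψ) (y : E) (i j : Fin d) :
    |fderiv ℝ (fun z => fderiv ℝ ψ z (EuclideanSpace.single j 1)) y (EuclideanSpace.single i 1)|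
      ≤ ‖iteratedFDeriv ℝ 2 ψ y‖ := by
  have hfd : ContDiff ℝ (⊤:ℕ∞) (fderiv ℝ ψ) := hψ.fderiv_right (by norm_cast)
  have hfdy : DifferentiableAt ℝ (fderiv ℝ ψ) y := (hfd.differentiable (by norm_cast)) y
  have h := ((ContinuousLinearMap.apply ℝ ℝ (EuclideanSpace.single j (1:ℝ))).hasFDerivAt.comp y
    hfdy.hasFDerivAt)
  have h2 : fderiv ℝ (fun z => fderiv ℝ ψ z (EuclideanSpace.single j 1)) y
      = (ContinuousLinearMap.apply ℝ ℝ (EuclideanSpace.single j (1:ℝ))).comp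
          (fderiv ℝ (fderiv ℝ ψ) y) := h.fderiv
  rw [h2]
  have h3 : ((ContinuousLinearMap.apply ℝ ℝ (EuclideanSpace.single j (1:ℝ))).comp
      (fderiv ℝ (fderiv ℝ ψ) y)) (EuclideanSpace.single i 1)
      = (fderiv ℝ (fderiv ℝ ψ) y (EuclideanSpace.single i 1)) (EuclideanSpace.single j 1) := rfl
  rw [h3]
  have h4 : |(fderiv ℝ (fderiv ℝ ψ) y (EuclideanSpace.single i 1)) (EuclideanSpace.single j 1)|
      ≤ ‖fderiv ℝ (fderiv ℝ ψ) y (EuclideanSpace.single i 1)‖ :=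
    aux_opnorm_single _ j
  have h5 : ‖fderiv ℝ (fderiv ℝ ψ) y (EuclideanSpace.single i 1)‖
      ≤ ‖fderiv ℝ (fderiv ℝ ψ) y‖ := by
    have := (fderiv ℝ (fderiv ℝ ψ) y).le_opNorm (EuclideanSpace.single i (1:ℝ))
    rw [EuclideanSpace.norm_single] at this
    simpa using this
  have h6 : ‖fderiv ℝ (fderiv ℝ ψ) y‖ = ‖iteratedFDeriv ℝ 2 ψ y‖ := by
    rw [aux_norm_fderiv_eq, norm_iteratedFDeriv_fderiv]
  linarith
end Aux4

noncomputable section AuxDefs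
variable {d : ℕ}

/-- auxiliary: components of ∇ψ. -/
def auxBb (ψ : EuclideanSpace ℝ (Fin d) → ℝ) (x : EuclideanSpace ℝ (Fin d)) (j : Fin d) : ℝ :=
  fderiv ℝ ψ x (EuclideanSpace.single j 1)

/-- auxiliary: σ = λ e^{λψ}. -/
def auxS (ψ : EuclideanSpace ℝ (Fin d) → ℝ) (lam : ℝ) (x : EuclideanSpace ℝ (Fin d)) : ℝ :=
  lam * Real.exp (lam * ψ x)

def auxDa (K : EuclideanSpace ℝ (Fin d) → Matrix (Fin d) (Fin d) ℝ)
    (x : EuclideanSpace ℝ (Fin d)) (i j k : Fin d) : ℝ :=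
  fderiv ℝ (fun y => K y j k) x (EuclideanSpace.single i 1)

def auxHx (ψ : EuclideanSpace ℝ (Fin d) → ℝ) (x : EuclideanSpace ℝ (Fin d)) (i j : Fin d) : ℝ :=
  fderiv ℝ (fun y => fderiv ℝ ψ y (EuclideanSpace.single j 1)) x (EuclideanSpace.single i 1)

def auxU (K : EuclideanSpace ℝ (Fin d) → Matrix (Fin d) (Fin d) ℝ) (ψ : EuclideanSpace ℝ (Fin d) → ℝ)
    (x ξ : EuclideanSpace ℝ (Fin d)) : ℝ := ∑ j, ∑ k, auxBb ψ x j * K x j k * ξ k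

def auxP (K : EuclideanSpace ℝ (Fin d) → Matrix (Fin d) (Fin d) ℝ) (ψ : EuclideanSpace ℝ (Fin d) → ℝ)
    (x : EuclideanSpace ℝ (Fin d)) : ℝ := ∑ j, ∑ k, auxBb ψ x j * K x j k * auxBb ψ x k

def auxV (K : EuclideanSpace ℝ (Fin d) → Matrix (Fin d) (Fin d) ℝ)
    (x ξ : EuclideanSpace ℝ (Fin d)) (i : Fin d) : ℝ := ∑ j, K x i j * ξ j

def auxWi (K : EuclideanSpace ℝ (Fin d) → Matrix (Fin d) (Fin d) ℝ) (ψ : EuclideanSpace ℝ (Fin d) → ℝ)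
    (x : EuclideanSpace ℝ (Fin d)) (i : Fin d) : ℝ := ∑ j, auxBb ψ x j * K x j i

def auxX (K : EuclideanSpace ℝ (Fin d) → Matrix (Fin d) (Fin d) ℝ) (ψ : EuclideanSpace ℝ (Fin d) → ℝ)
    (x ξ : EuclideanSpace ℝ (Fin d)) (i : Fin d) : ℝ :=
  ∑ j, ∑ k, (auxHx ψ x i j * K x j k + auxBb ψ x j * auxDa K x i j k) * ξ k

def auxDxx (K : EuclideanSpace ℝ (Fin d) → Matrix (Fin d) (Fin d) ℝ)
    (x ξ : EuclideanSpace ℝ (Fin d)) (i : Fin d) : ℝ := ∑ j, ∑ k, auxDa K x i j k * ξ j * ξ k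

def auxWW (K : EuclideanSpace ℝ (Fin d) → Matrix (Fin d) (Fin d) ℝ) (ψ : EuclideanSpace ℝ (Fin d) → ℝ)
    (x : EuclideanSpace ℝ (Fin d)) (i : Fin d) : ℝ :=
  ∑ j, ∑ k, (auxHx ψ x i j * K x j k * auxBb ψ x k + auxBb ψ x j * K x j k * auxHx ψ x i k
    + auxBb ψ x j * auxDa K x i j k * auxBb ψ x k)

def auxR (K : EuclideanSpace ℝ (Fin d) → Matrix (Fin d) (Fin d) ℝ) (ψ : EuclideanSpace ℝ (Fin d) → ℝ) (lam : ℝ)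
    (x ξ : EuclideanSpace ℝ (Fin d)) (i : Fin d) : ℝ :=
  4 * auxS ψ lam x * auxV K x ξ i * auxX K ψ x ξ i
    - 2 * auxS ψ lam x * auxWi K ψ x i * auxDxx K x ξ i
    + 2 * (auxS ψ lam x)^3 * auxWi K ψ x i * auxWW K ψ x i

end AuxDefs

section AuxEq
variable {d : ℕ}
local notation "E" => EuclideanSpace ℝ (Fin d)

lemma aux_qR_eq (K : E → Matrix (Fin d) (Fin d) ℝ) (ψ : E → ℝ)
    (hψ : ContDiff ℝ (⊤ : ℕ∞) ψ) (lam : ℝ) (x ξ : E) :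
    carlemanQR K ψ lam x ξ = quadForm K x ξ - (auxS ψ lam x)^2 * auxP K ψ x := by
  rw [carlemanQR]
  congr 1
  rw [aux_gradCW ψ hψ lam x]
  simp only [quadForm, PiLp.smul_apply, smul_eq_mul, auxP, Finset.mul_sum]
  refine Finset.sum_congr rfl fun j _ => Finset.sum_congr rfl fun k _ => ?_
  rw [aux_grad_coord, aux_grad_coord]
  simp only [auxS, auxBb]
  ring

lemma aux_qI_eq (K : E → Matrix (Fin d) (Fin d) ℝ) (ψ : E → ℝ)
    (hψ : ContDiff ℝ (⊤ : ℕ∞) ψ) (lam : ℝ) (x ξ : E) :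
    carlemanQI K ψ lam x ξ = 2 * (auxS ψ lam x * auxU K ψ x ξ) := by
  rw [carlemanQI, aux_gradCW ψ hψ lam x]
  congr 1
  rw [auxU, Finset.mul_sum]
  refine Finset.sum_congr rfl fun j _ => ?_
  rw [Finset.mul_sum]
  refine Finset.sum_congr rfl fun k _ => ?_
  simp only [PiLp.smul_apply, smul_eq_mul, auxS, auxBb]
  rw [aux_grad_coord]
  ring
end AuxEq

section AuxBr
variable {d : ℕ}
local notation "E" => EuclideanSpace ℝ (Fin d)

lemma aux_bracket (K : E → Matrix (Fin d) (Fin d) ℝ) (hKsymm : ∀ x, (K x).IsSymm)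
    (hK : ∀ i j : Fin d, ContDiff ℝ (⊤ : ℕ∞) fun x => K x i j)
    (ψ : E → ℝ) (hψ : ContDiff ℝ (⊤ : ℕ∞) ψ) (lam : ℝ) (x ξ : E) :
    poissonBracket (carlemanQR K ψ lam) (carlemanQI K ψ lam) x ξ
      = 4*lam*auxS ψ lam x*(auxU K ψ x ξ)^2 + 4*lam*(auxS ψ lam x)^3*(auxP K ψ x)^2
        + ∑ i, auxR K ψ lam x ξ i := by
  have h1 : ∀ i : Fin d, fderiv ℝ (carlemanQR K ψ lam x) ξ (EuclideanSpace.single i 1)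
      = 2 * auxV K x ξ i := by
    intro i
    have e1 : carlemanQR K ψ lam x = fun ξ' => (∑ j, ∑ k, ξ' j * K x j k * ξ' k)
        - quadForm K x (gradient (carlemanWeight ψ lam) x) := rfl
    rw [e1, fderiv_sub_const, aux_fderiv_quad (fun j k => K x j k) ξ i, auxV, two_mul]
    congr 1
    refine Finset.sum_congr rfl fun j _ => ?_
    rw [show K x j i = K x i j from (hKsymm x).apply i j]
    ring
  have h2 : ∀ i : Fin d, fderiv ℝ (carlemanQI K ψ lam x) ξ (EuclideanSpace.single i 1)
      = 2 * (auxS ψ lam x * auxWi K ψ x i) := by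
    intro i
    have e2 : carlemanQI K ψ lam x = fun ξ' => 2 * ∑ j, ∑ k,
        gradient (carlemanWeight ψ lam) x j * K x j k * ξ' k := rfl
    rw [e2, aux_fderiv_lin (fun j => gradient (carlemanWeight ψ lam) x j) (fun j k => K x j k)]
    congr 1
    rw [auxWi, Finset.mul_sum]
    refine Finset.sum_congr rfl fun j _ => ?_
    rw [aux_gradCW ψ hψ lam x]
    simp only [PiLp.smul_apply, smul_eq_mul, auxS, auxBb]
    rw [aux_grad_coord]
    ring
  have h3 : ∀ i : Fin d, fderiv ℝ (fun x' => carlemanQI K ψ lam x' ξ) x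
        (EuclideanSpace.single i 1)
      = 2*lam*auxS ψ lam x*auxBb ψ x i*auxU K ψ x ξ + 2*auxS ψ lam x*auxX K ψ x ξ i := by
    intro i
    rw [aux_fderiv_QI_x K hK ψ hψ lam ξ x i]
    calc 2 * ∑ j, ∑ k,
        (((lam * Real.exp (lam * ψ x) * (lam * fderiv ℝ ψ x (EuclideanSpace.single i 1)))
            * fderiv ℝ ψ x (EuclideanSpace.single j 1)
          + (lam * Real.exp (lam * ψ x))
            * fderiv ℝ (fun y => fderiv ℝ ψ y (EuclideanSpace.single j 1)) x
                (EuclideanSpace.single i 1))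
          * K x j k
        + (lam * Real.exp (lam * ψ x) * fderiv ℝ ψ x (EuclideanSpace.single j 1))
            * fderiv ℝ (fun y => K y j k) x (EuclideanSpace.single i 1)) * ξ k
        = 2 * ∑ j, ∑ k,
          ((lam * auxS ψ lam x * auxBb ψ x i) * (auxBb ψ x j * K x j k * ξ k)
            + (auxS ψ lam x) * ((auxHx ψ x i j * K x j k + auxBb ψ x j * auxDa K x i j k) * ξ k)) := by
          congr 1
          refine Finset.sum_congr rfl fun j _ => Finset.sum_congr rfl fun k _ => ?_
          simp only [auxS, auxBb, auxHx, auxDa]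
          ring
      _ = 2*lam*auxS ψ lam x*auxBb ψ x i*auxU K ψ x ξ + 2*auxS ψ lam x*auxX K ψ x ξ i := by
          simp only [Finset.sum_add_distrib, ← Finset.mul_sum, auxU, auxX]
          ring
  have h4 : ∀ i : Fin d, fderiv ℝ (fun x' => carlemanQR K ψ lam x' ξ) x
        (EuclideanSpace.single i 1)
      = auxDxx K x ξ i
        - (2*lam*(auxS ψ lam x)^2*auxBb ψ x i*auxP K ψ x + (auxS ψ lam x)^2*auxWW K ψ x i) := by
    intro i
    rw [aux_fderiv_QR_x K hK ψ hψ lam ξ x i]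
    congr 1
    calc (∑ j, ∑ k,
          ((((lam * Real.exp (lam * ψ x) * (lam * fderiv ℝ ψ x (EuclideanSpace.single i 1)))
              * fderiv ℝ ψ x (EuclideanSpace.single j 1)
            + (lam * Real.exp (lam * ψ x))
              * fderiv ℝ (fun y => fderiv ℝ ψ y (EuclideanSpace.single j 1)) x
                  (EuclideanSpace.single i 1)) * K x j k
            + (lam * Real.exp (lam * ψ x) * fderiv ℝ ψ x (EuclideanSpace.single j 1))
              * fderiv ℝ (fun y => K y j k) x (EuclideanSpace.single i 1))
            * (lam * Real.exp (lam * ψ x) * fderiv ℝ ψ x (EuclideanSpace.single k 1))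
          + (lam * Real.exp (lam * ψ x) * fderiv ℝ ψ x (EuclideanSpace.single j 1)) * K x j k
            * ((lam * Real.exp (lam * ψ x) * (lam * fderiv ℝ ψ x (EuclideanSpace.single i 1)))
                * fderiv ℝ ψ x (EuclideanSpace.single k 1)
              + (lam * Real.exp (lam * ψ x))
                * fderiv ℝ (fun y => fderiv ℝ ψ y (EuclideanSpace.single k 1)) x
                    (EuclideanSpace.single i 1))))
        = ∑ j, ∑ k,
          ((2*lam*(auxS ψ lam x)^2*auxBb ψ x i) * (auxBb ψ x j * K x j k * auxBb ψ x k)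
            + ((auxS ψ lam x)^2) * (auxHx ψ x i j * K x j k * auxBb ψ x k
                + auxBb ψ x j * K x j k * auxHx ψ x i k
                + auxBb ψ x j * auxDa K x i j k * auxBb ψ x k)) := by
          refine Finset.sum_congr rfl fun j _ => Finset.sum_congr rfl fun k _ => ?_
          simp only [auxS, auxBb, auxHx, auxDa]
          ring
      _ = 2*lam*(auxS ψ lam x)^2*auxBb ψ x i*auxP K ψ x + (auxS ψ lam x)^2*auxWW K ψ x i := by
          simp only [Finset.sum_add_distrib, ← Finset.mul_sum, auxP, auxWW]
  have hvu : ∑ i, auxV K x ξ i * auxBb ψ x i = auxU K ψ x ξ := by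
    calc ∑ i, auxV K x ξ i * auxBb ψ x i
        = ∑ i, ∑ j, auxBb ψ x i * K x i j * ξ j := by
          refine Finset.sum_congr rfl fun i _ => ?_
          rw [auxV, Finset.sum_mul]
          exact Finset.sum_congr rfl fun j _ => by ring
      _ = auxU K ψ x ξ := rfl
  have hwp : ∑ i, auxWi K ψ x i * auxBb ψ x i = auxP K ψ x := by
    calc ∑ i, auxWi K ψ x i * auxBb ψ x i
        = ∑ i, ∑ j, auxBb ψ x j * K x j i * auxBb ψ x i := by
          refine Finset.sum_congr rfl fun i _ => ?_
          rw [auxWi, Finset.sum_mul]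
      _ = ∑ j, ∑ i, auxBb ψ x j * K x j i * auxBb ψ x i := Finset.sum_comm
      _ = auxP K ψ x := rfl
  calc poissonBracket (carlemanQR K ψ lam) (carlemanQI K ψ lam) x ξ
      = ∑ i : Fin d,
      (fderiv ℝ (carlemanQR K ψ lam x) ξ (EuclideanSpace.single i 1) *
          fderiv ℝ (fun x' => carlemanQI K ψ lam x' ξ) x (EuclideanSpace.single i 1) -
        fderiv ℝ (fun x' => carlemanQR K ψ lam x' ξ) x (EuclideanSpace.single i 1) *
          fderiv ℝ (carlemanQI K ψ lam x) ξ (EuclideanSpace.single i 1)) := rfl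
    _ = ∑ i : Fin d,
        ((4*lam*auxS ψ lam x*auxU K ψ x ξ) * (auxV K x ξ i * auxBb ψ x i)
          + ((4*lam*(auxS ψ lam x)^3*auxP K ψ x) * (auxWi K ψ x i * auxBb ψ x i)
          + auxR K ψ lam x ξ i)) := by
        refine Finset.sum_congr rfl fun i _ => ?_
        rw [h1 i, h2 i, h3 i, h4 i, auxR]
        ring
    _ = (4*lam*auxS ψ lam x*auxU K ψ x ξ) * (∑ i, auxV K x ξ i * auxBb ψ x i)
        + ((4*lam*(auxS ψ lam x)^3*auxP K ψ x) * (∑ i, auxWi K ψ x i * auxBb ψ x i)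
        + ∑ i, auxR K ψ lam x ξ i) := by
        rw [Finset.sum_add_distrib, Finset.sum_add_distrib, ← Finset.mul_sum, ← Finset.mul_sum]
    _ = 4*lam*auxS ψ lam x*(auxU K ψ x ξ)^2 + 4*lam*(auxS ψ lam x)^3*(auxP K ψ x)^2
        + ∑ i, auxR K ψ lam x ξ i := by
        rw [hvu, hwp]
        ring
end AuxBr

section AuxBd
variable {d : ℕ}
local notation "E" => EuclideanSpace ℝ (Fin d)

lemma aux_mul3 {a b c A B C : ℝ} (ha : |a| ≤ A) (hb : |b| ≤ B) (hc : |c| ≤ C)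
    (hA : 0 ≤ A) (hB : 0 ≤ B) : |a*b*c| ≤ A*B*C := by
  rw [abs_mul, abs_mul]
  exact mul_le_mul (mul_le_mul ha hb (abs_nonneg _) hA) hc (abs_nonneg _) (by positivity)

lemma aux_R_bound (K : E → Matrix (Fin d) (Fin d) ℝ) (ψ : E → ℝ) (lam : ℝ) (x ξ : E)
    (CK CK' P1 P2 : ℝ) (hCK : 0 ≤ CK) (hCK' : 0 ≤ CK') (hP1 : 0 ≤ P1) (hP2 : 0 ≤ P2)
    (hs : 0 ≤ auxS ψ lam x)
    (hA : ∀ j k, |K x j k| ≤ CK)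
    (hDa : ∀ i j k, |auxDa K x i j k| ≤ CK')
    (hB : ∀ j, |auxBb ψ x j| ≤ P1)
    (hH : ∀ i j, |auxHx ψ x i j| ≤ P2) :
    |∑ i, auxR K ψ lam x ξ i| ≤
      ((d:ℝ)^4*(4*CK*(P2*CK + P1*CK') + 2*P1*CK*CK')) * (auxS ψ lam x * ‖ξ‖^2)
      + ((d:ℝ)^4*(2*P1*CK*(2*P2*CK*P1 + P1^2*CK'))) * (auxS ψ lam x)^3 := by
  set s := auxS ψ lam x with hsdef
  set T := ‖ξ‖ with hT
  have hTnn : (0:ℝ) ≤ T := norm_nonneg _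
  have hco : ∀ j, |ξ j| ≤ T := fun j => aux_coord_le_norm ξ j
  have hv : ∀ i, |auxV K x ξ i| ≤ (d:ℝ)*(CK*T) := fun i => by
    apply aux_abs_sum_le
    intro j
    rw [abs_mul]
    exact mul_le_mul (hA i j) (hco j) (abs_nonneg _) hCK
  have hw : ∀ i, |auxWi K ψ x i| ≤ (d:ℝ)*(P1*CK) := fun i => by
    apply aux_abs_sum_le
    intro j
    rw [abs_mul]
    exact mul_le_mul (hB j) (hA j i) (abs_nonneg _) hP1
  have hX : ∀ i, |auxX K ψ x ξ i| ≤ (d:ℝ)^2*((P2*CK + P1*CK')*T) := fun i => by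
    apply aux_abs_sum2_le _ _ _ (by positivity)
    intro j k
    rw [abs_mul]
    refine mul_le_mul ?_ (hco k) (abs_nonneg _) (by positivity)
    calc |auxHx ψ x i j * K x j k + auxBb ψ x j * auxDa K x i j k|
        ≤ |auxHx ψ x i j * K x j k| + |auxBb ψ x j * auxDa K x i j k| := abs_add_le _ _
      _ ≤ P2*CK + P1*CK' := by
          rw [abs_mul, abs_mul]
          exact add_le_add (mul_le_mul (hH i j) (hA j k) (abs_nonneg _) hP2)
            (mul_le_mul (hB j) (hDa i j k) (abs_nonneg _) hP1)
  have hDxx : ∀ i, |auxDxx K x ξ i| ≤ (d:ℝ)^2*(CK'*T*T) := fun i => by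
    apply aux_abs_sum2_le _ _ _ (by positivity)
    intro j k
    exact aux_mul3 (hDa i j k) (hco j) (hco k) hCK' hTnn
  have hWW : ∀ i, |auxWW K ψ x i| ≤ (d:ℝ)^2*(P2*CK*P1 + P1*CK*P2 + P1*CK'*P1) := fun i => by
    apply aux_abs_sum2_le _ _ _ (by positivity)
    intro j k
    calc |auxHx ψ x i j * K x j k * auxBb ψ x k + auxBb ψ x j * K x j k * auxHx ψ x i k
          + auxBb ψ x j * auxDa K x i j k * auxBb ψ x k|
        ≤ |auxHx ψ x i j * K x j k * auxBb ψ x k + auxBb ψ x j * K x j k * auxHx ψ x i k|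
          + |auxBb ψ x j * auxDa K x i j k * auxBb ψ x k| := abs_add_le _ _
      _ ≤ (|auxHx ψ x i j * K x j k * auxBb ψ x k| + |auxBb ψ x j * K x j k * auxHx ψ x i k|)
          + |auxBb ψ x j * auxDa K x i j k * auxBb ψ x k| := by
          exact add_le_add (abs_add_le _ _) le_rfl
      _ ≤ P2*CK*P1 + P1*CK*P2 + P1*CK'*P1 := by
          have b1 := aux_mul3 (hH i j) (hA j k) (hB k) hP2 hCK
          have b2 := aux_mul3 (hB j) (hA j k) (hH i k) hP1 hCK
          have b3 := aux_mul3 (hB j) (hDa i j k) (hB k) hP1 hCK'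
          linarith
  have hr : ∀ i, |auxR K ψ lam x ξ i| ≤
      4*s*((d:ℝ)*(CK*T))*((d:ℝ)^2*((P2*CK + P1*CK')*T))
      + 2*s*((d:ℝ)*(P1*CK))*((d:ℝ)^2*(CK'*T*T))
      + 2*s^3*((d:ℝ)*(P1*CK))*((d:ℝ)^2*(P2*CK*P1 + P1*CK*P2 + P1*CK'*P1)) := by
    intro i
    have e1 : |4*s*auxV K x ξ i*auxX K ψ x ξ i|
        ≤ 4*s*((d:ℝ)*(CK*T))*((d:ℝ)^2*((P2*CK + P1*CK')*T)) := by
      have : |4*s*auxV K x ξ i*auxX K ψ x ξ i|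
          = (4*s)*|auxV K x ξ i| * |auxX K ψ x ξ i| := by
        rw [abs_mul, abs_mul, abs_of_nonneg (by positivity : (0:ℝ) ≤ 4*s)]
      rw [this]
      exact mul_le_mul (mul_le_mul_of_nonneg_left (hv i) (by positivity : (0:ℝ) ≤ 4*s))
        (hX i) (abs_nonneg _) (by positivity)
    have e2 : |2*s*auxWi K ψ x i*auxDxx K x ξ i|
        ≤ 2*s*((d:ℝ)*(P1*CK))*((d:ℝ)^2*(CK'*T*T)) := by
      have : |2*s*auxWi K ψ x i*auxDxx K x ξ i|
          = (2*s)*|auxWi K ψ x i| * |auxDxx K x ξ i| := by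
        rw [abs_mul, abs_mul, abs_of_nonneg (by positivity : (0:ℝ) ≤ 2*s)]
      rw [this]
      exact mul_le_mul (mul_le_mul_of_nonneg_left (hw i) (by positivity : (0:ℝ) ≤ 2*s))
        (hDxx i) (abs_nonneg _) (by positivity)
    have e3 : |2*s^3*auxWi K ψ x i*auxWW K ψ x i|
        ≤ 2*s^3*((d:ℝ)*(P1*CK))*((d:ℝ)^2*(P2*CK*P1 + P1*CK*P2 + P1*CK'*P1)) := by
      have : |2*s^3*auxWi K ψ x i*auxWW K ψ x i|
          = (2*s^3)*|auxWi K ψ x i| * |auxWW K ψ x i| := by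
        rw [abs_mul, abs_mul, abs_of_nonneg (by positivity : (0:ℝ) ≤ 2*s^3)]
      rw [this]
      exact mul_le_mul (mul_le_mul_of_nonneg_left (hw i) (by positivity : (0:ℝ) ≤ 2*s^3))
        (hWW i) (abs_nonneg _) (by positivity)
    have tri : |auxR K ψ lam x ξ i| ≤ |4*s*auxV K x ξ i*auxX K ψ x ξ i|
        + |2*s*auxWi K ψ x i*auxDxx K x ξ i| + |2*s^3*auxWi K ψ x i*auxWW K ψ x i| := by
      rw [auxR]
      calc |4*s*auxV K x ξ i*auxX K ψ x ξ i - 2*s*auxWi K ψ x i*auxDxx K x ξ i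
            + 2*s^3*auxWi K ψ x i*auxWW K ψ x i|
          ≤ |4*s*auxV K x ξ i*auxX K ψ x ξ i - 2*s*auxWi K ψ x i*auxDxx K x ξ i|
            + |2*s^3*auxWi K ψ x i*auxWW K ψ x i| := abs_add_le _ _
        _ ≤ |4*s*auxV K x ξ i*auxX K ψ x ξ i| + |2*s*auxWi K ψ x i*auxDxx K x ξ i|
            + |2*s^3*auxWi K ψ x i*auxWW K ψ x i| := by
            have := abs_sub (4*s*auxV K x ξ i*auxX K ψ x ξ i)
              (2*s*auxWi K ψ x i*auxDxx K x ξ i)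
            linarith
    linarith
  have hsum := aux_abs_sum_le (fun i => auxR K ψ lam x ξ i) _ hr
  calc |∑ i, auxR K ψ lam x ξ i|
      ≤ (d:ℝ) * (4*s*((d:ℝ)*(CK*T))*((d:ℝ)^2*((P2*CK + P1*CK')*T))
        + 2*s*((d:ℝ)*(P1*CK))*((d:ℝ)^2*(CK'*T*T))
        + 2*s^3*((d:ℝ)*(P1*CK))*((d:ℝ)^2*(P2*CK*P1 + P1*CK*P2 + P1*CK'*P1))) := hsum
    _ = ((d:ℝ)^4*(4*CK*(P2*CK + P1*CK') + 2*P1*CK*CK')) * (s * T^2)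
        + ((d:ℝ)^4*(2*P1*CK*(2*P2*CK*P1 + P1^2*CK'))) * s^3 := by ring
end AuxBd


set_option maxHeartbeats 1000000

/-- Let `K` be a uniformly elliptic smooth metric, `ω ⊆ ℝ^d`, and `ψ` a
`C_b^∞` function with `‖∇ψ‖ ≥ α₀ > 0` outside `ω`. For `φ = e^{λψ}` and the Carleman
symbols `q_R, q_I`, there is `λ₀ > 0` such that for all `λ ≥ λ₀` there are `η > 0` and
`c > 0` with `η (q_R² + q_I²) + {q_R, q_I} ≥ c (1 + ‖ξ‖²)²` for all `x ∉ ω` and all `ξ`. -/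
theorem stmt10 {d : ℕ}
    (K : EuclideanSpace ℝ (Fin d) → Matrix (Fin d) (Fin d) ℝ)
    (hKsymm : ∀ x, (K x).IsSymm)
    (hKsmooth : ∀ i j : Fin d, ContDiff ℝ (⊤ : ℕ∞) fun x => K x i j)
    (hKbdd : ∀ i j : Fin d, ∀ n : ℕ, ∃ C : ℝ,
      ∀ x, ‖iteratedFDeriv ℝ n (fun y => K y i j) x‖ ≤ C)
    (Kinf Ksup : ℝ) (hKinf : 0 < Kinf) (hKK : Kinf ≤ Ksup)
    (hell : ∀ x ξ : EuclideanSpace ℝ (Fin d),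
      Kinf * ‖ξ‖ ^ 2 ≤ quadForm K x ξ ∧ quadForm K x ξ ≤ Ksup * ‖ξ‖ ^ 2)
    (ω : Set (EuclideanSpace ℝ (Fin d)))
    (ψ : EuclideanSpace ℝ (Fin d) → ℝ)
    (hψ : ContDiff ℝ (⊤ : ℕ∞) ψ)
    (hψbdd : ∀ n : ℕ, ∃ C : ℝ, ∀ x, ‖iteratedFDeriv ℝ n ψ x‖ ≤ C)
    (α₀ : ℝ) (hα₀ : 0 < α₀) (hgrad : ∀ x, x ∉ ω → α₀ ≤ ‖gradient ψ x‖) :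
    ∃ lam₀ : ℝ, 0 < lam₀ ∧ ∀ lam : ℝ, lam₀ ≤ lam →
      ∃ η c : ℝ, 0 < η ∧ 0 < c ∧
        ∀ x, x ∉ ω → ∀ ξ : EuclideanSpace ℝ (Fin d),
          c * (1 + ‖ξ‖ ^ 2) ^ 2 ≤
            η * (carlemanQR K ψ lam x ξ ^ 2 + carlemanQI K ψ lam x ξ ^ 2) +
              poissonBracket (carlemanQR K ψ lam) (carlemanQI K ψ lam) x ξ := by
  obtain ⟨C0, hC0⟩ := hψbdd 0
  obtain ⟨C1, hC1⟩ := hψbdd 1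
  obtain ⟨C2, hC2⟩ := hψbdd 2
  choose CKf hCKf using hKbdd
  have hmem : ∀ (g : Fin d → Fin d → ℝ), (∀ a b, 0 ≤ g a b) → ∀ j k,
      g j k ≤ ∑ a : Fin d, ∑ b : Fin d, g a b := by
    intro g h j k
    calc g j k ≤ ∑ b, g j b := Finset.single_le_sum (fun b _ => h j b) (Finset.mem_univ k)
      _ ≤ ∑ a, ∑ b, g a b := Finset.single_le_sum (f := fun a => ∑ b, g a b)
          (fun a _ => Finset.sum_nonneg fun b _ => h a b) (Finset.mem_univ j)
  obtain ⟨P0, hP0nn, hψ0⟩ : ∃ P0 : ℝ, 0 ≤ P0 ∧ ∀ y, |ψ y| ≤ P0 := by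
    refine ⟨|C0|, abs_nonneg _, fun y => ?_⟩
    have h := hC0 y
    rw [norm_iteratedFDeriv_zero, Real.norm_eq_abs] at h
    exact le_trans h (le_abs_self _)
  obtain ⟨P1, hP1nn, hψ1⟩ : ∃ P1 : ℝ, 0 ≤ P1 ∧ ∀ y, ‖fderiv ℝ ψ y‖ ≤ P1 := by
    refine ⟨|C1|, abs_nonneg _, fun y => ?_⟩
    rw [aux_norm_fderiv_eq]
    exact le_trans (hC1 y) (le_abs_self _)
  have hBb : ∀ (y : EuclideanSpace ℝ (Fin d)) j, |auxBb ψ y j| ≤ P1 := by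
    intro y j
    exact le_trans (aux_opnorm_single (fderiv ℝ ψ y) j) (hψ1 y)
  obtain ⟨P2, hP2nn, hHb⟩ : ∃ P2 : ℝ, 0 ≤ P2 ∧
      ∀ (y : EuclideanSpace ℝ (Fin d)) i j, |auxHx ψ y i j| ≤ P2 := by
    refine ⟨|C2|, abs_nonneg _, fun y i j => ?_⟩
    refine le_trans (aux_fderiv_fderiv ψ hψ y i j) ?_
    exact le_trans (hC2 y) (le_abs_self _)
  obtain ⟨CK, hCKnn, hAb⟩ : ∃ CK : ℝ, 0 ≤ CK ∧
      ∀ (y : EuclideanSpace ℝ (Fin d)) j k, |K y j k| ≤ CK := by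
    refine ⟨∑ j : Fin d, ∑ k : Fin d, |CKf j k 0|,
      Finset.sum_nonneg fun j _ => Finset.sum_nonneg fun k _ => abs_nonneg _, fun y j k => ?_⟩
    have h := hCKf j k 0 y
    rw [norm_iteratedFDeriv_zero, Real.norm_eq_abs] at h
    exact le_trans h (le_trans (le_abs_self _)
      (hmem (fun a b => |CKf a b 0|) (fun a b => abs_nonneg _) j k))
  obtain ⟨CK', hCK'nn, hDab⟩ : ∃ CK' : ℝ, 0 ≤ CK' ∧
      ∀ (y : EuclideanSpace ℝ (Fin d)) i j k, |auxDa K y i j k| ≤ CK' := by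
    refine ⟨∑ j : Fin d, ∑ k : Fin d, |CKf j k 1|,
      Finset.sum_nonneg fun j _ => Finset.sum_nonneg fun k _ => abs_nonneg _, fun y i j k => ?_⟩
    refine le_trans (aux_opnorm_single (fderiv ℝ (fun z => K z j k) y) i) ?_
    rw [aux_norm_fderiv_eq]
    exact le_trans (hCKf j k 1 y) (le_trans (le_abs_self _)
      (hmem (fun a b => |CKf a b 1|) (fun a b => abs_nonneg _) j k))
  -- constants
  have hKsup : 0 < Ksup := lt_of_lt_of_le hKinf hKK
  set m : ℝ := Kinf * α₀^2 with hmdef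
  have hm : 0 < m := by positivity
  set M : ℝ := Ksup * P1^2 + 1 with hMdef
  have hM : 0 < M := by positivity
  set C6a : ℝ := (d:ℝ)^4*(4*CK*(P2*CK + P1*CK') + 2*P1*CK*CK') with hC6adef
  set C6b : ℝ := (d:ℝ)^4*(2*P1*CK*(2*P2*CK*P1 + P1^2*CK')) with hC6bdef
  have hC6a : 0 ≤ C6a := by positivity
  have hC6b : 0 ≤ C6b := by positivity
  set B1 : ℝ := 2*M/Kinf with hB1def
  have hB1 : 0 < B1 := by positivity
  set C7 : ℝ := C6a*B1 + C6b with hC7def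
  have hC7 : 0 ≤ C7 := by positivity
  refine ⟨max 1 ((C7 + 1)/(4*m^2)), lt_of_lt_of_le one_pos (le_max_left _ _), ?_⟩
  intro lam hlam
  have hlam1 : 1 ≤ lam := le_trans (le_max_left _ _) hlam
  have hlam0 : 0 < lam := lt_of_lt_of_le one_pos hlam1
  have hlamm : C7 + 1 ≤ 4*lam*m^2 := by
    have h := le_trans (le_max_right 1 ((C7 + 1)/(4*m^2))) hlam
    rw [div_le_iff₀ (by positivity)] at h
    linarith
  set sl : ℝ := lam * Real.exp (-(lam * P0)) with hsldef
  set su : ℝ := lam * Real.exp (lam * P0) with hsudef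
  have hsl : 0 < sl := by positivity
  have hsu : 0 < su := by positivity
  have hslsu : sl ≤ su := by
    apply mul_le_mul_of_nonneg_left _ hlam0.le
    apply Real.exp_le_exp.2
    have := mul_nonneg hlam0.le hP0nn
    linarith
  set B1' : ℝ := B1 * sl^2 with hB1'def
  have hB1' : 0 < B1' := by positivity
  set DD : ℝ := (1 + B1*su^2)^2 with hDDdef
  have hDD : 0 < DD := by positivity
  set c : ℝ := min (sl^3 / DD) 1 with hcdef
  have hc : 0 < c := lt_min (by positivity) one_pos
  set G : ℝ := c*(1 + 1/B1')^2 + C6a*su/B1' + C6b*su^3/B1'^2 with hGdef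
  have hG : 0 ≤ G := by positivity
  set η : ℝ := (4/Kinf^2)*G + 1 with hηdef
  have hη : 0 < η := by positivity
  refine ⟨η, c, hη, hc, ?_⟩
  intro x hx ξ
  -- per-point notation
  have hs_pos : 0 < auxS ψ lam x := mul_pos hlam0 (Real.exp_pos _)
  set s : ℝ := auxS ψ lam x with hsdef
  set T2 : ℝ := ‖ξ‖^2 with hT2def
  have hT2nn : 0 ≤ T2 := by positivity
  set Q : ℝ := quadForm K x ξ with hQdef
  set u : ℝ := auxU K ψ x ξ with hudef
  set p : ℝ := auxP K ψ x with hpdef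
  set R : ℝ := ∑ i, auxR K ψ lam x ξ i with hRdef
  have hs_lb : sl ≤ s := by
    rw [hsldef, hsdef]
    show lam * Real.exp (-(lam * P0)) ≤ auxS ψ lam x
    have h1 : -(lam*P0) ≤ lam * ψ x := by
      have h2 := (abs_le.1 (hψ0 x)).1
      have h3 := mul_le_mul_of_nonneg_left h2 hlam0.le
      linarith
    exact mul_le_mul_of_nonneg_left (Real.exp_le_exp.2 h1) hlam0.le
  have hs_ub : s ≤ su := by
    rw [hsudef, hsdef]
    show auxS ψ lam x ≤ lam * Real.exp (lam * P0)
    have h1 : lam * ψ x ≤ lam*P0 := by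
      have h2 := (abs_le.1 (hψ0 x)).2
      have h3 := mul_le_mul_of_nonneg_left h2 hlam0.le
      linarith
    exact mul_le_mul_of_nonneg_left (Real.exp_le_exp.2 h1) hlam0.le
  have hQ1 : Kinf * T2 ≤ Q := (hell x ξ).1
  have hQ2 : Q ≤ Ksup * T2 := (hell x ξ).2
  have hp_eq : quadForm K x (gradient ψ x) = p := by
    rw [hpdef]
    simp only [quadForm, auxP, auxBb]
    exact Finset.sum_congr rfl fun j _ => Finset.sum_congr rfl fun k _ => by
      rw [aux_grad_coord, aux_grad_coord]
  have hgradx := hgrad x hx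
  have hgnn : 0 ≤ ‖gradient ψ x‖ := norm_nonneg _
  have hgP1 : ‖gradient ψ x‖ ≤ P1 := by
    rw [aux_norm_grad]
    exact hψ1 x
  have hpl : m ≤ p := by
    have h1 : α₀^2 ≤ ‖gradient ψ x‖^2 := pow_le_pow_left₀ hα₀.le hgradx 2
    have h2 := (hell x (gradient ψ x)).1
    rw [hp_eq] at h2
    rw [hmdef]
    have h3 := mul_le_mul_of_nonneg_left h1 hKinf.le
    linarith
  have hpu : p ≤ M := by
    have h1 : ‖gradient ψ x‖^2 ≤ P1^2 := pow_le_pow_left₀ hgnn hgP1 2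
    have h2 := (hell x (gradient ψ x)).2
    rw [hp_eq] at h2
    rw [hMdef]
    have h3 := mul_le_mul_of_nonneg_left h1 hKsup.le
    linarith
  have hqr : carlemanQR K ψ lam x ξ = Q - s^2*p := aux_qR_eq K ψ hψ lam x ξ
  have hqi : carlemanQI K ψ lam x ξ = 2*(s*u) := aux_qI_eq K ψ hψ lam x ξ
  have hbr : poissonBracket (carlemanQR K ψ lam) (carlemanQI K ψ lam) x ξ
      = 4*lam*s*u^2 + 4*lam*s^3*p^2 + R :=
    aux_bracket K hKsymm hKsmooth ψ hψ lam x ξ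
  have hRb : |R| ≤ C6a * (s*T2) + C6b * s^3 :=
    aux_R_bound K ψ lam x ξ CK CK' P1 P2 hCKnn hCK'nn hP1nn hP2nn hs_pos.le
      (hAb x) (hDab x) (hBb x) (hHb x)
  have hRlb : -(C6a * (s*T2) + C6b * s^3) ≤ R := neg_le_of_abs_le hRb
  -- the key inequality
  have hkey : c*(1+T2)^2 + (C6a*(s*T2) + C6b*s^3) ≤ η*(Q - s^2*p)^2 + 4*lam*s^3*p^2 := by
    rcases le_or_gt (Kinf * T2) (2*M*s^2) with hcase | hcase
    · -- case A : small frequencies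
      have hT2B : T2 ≤ B1*s^2 := by
        rw [hB1def, div_mul_eq_mul_div, le_div_iff₀ hKinf]
        linarith
      have herr : C6a*(s*T2) + C6b*s^3 ≤ C7*s^3 := by
        have h1 : s*T2 ≤ B1*s^3 := by
          have h0 := mul_le_mul_of_nonneg_left hT2B hs_pos.le
          have h0' : s*(B1*s^2) = B1*s^3 := by ring
          linarith
        have h2 : C6a*(s*T2) ≤ C6a*(B1*s^3) := mul_le_mul_of_nonneg_left h1 hC6a
        have h3 : C6a*(B1*s^3) + C6b*s^3 = C7*s^3 := by rw [hC7def]; ring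
        linarith
      have hcD : c*(1+T2)^2 ≤ sl^3 := by
        have h1 : 1+T2 ≤ 1 + B1*su^2 := by
          have hss : s^2 ≤ su^2 := pow_le_pow_left₀ hs_pos.le hs_ub 2
          have h0 := mul_le_mul_of_nonneg_left hss hB1.le
          linarith
        have h2 : (1+T2)^2 ≤ DD := by
          rw [hDDdef]
          exact pow_le_pow_left₀ (by linarith) h1 2
        have h3 : c*(1+T2)^2 ≤ c*DD := mul_le_mul_of_nonneg_left h2 hc.le
        have h4 : c*DD ≤ (sl^3/DD)*DD :=
          mul_le_mul_of_nonneg_right (min_le_left _ _) hDD.le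
        have h5 : (sl^3/DD)*DD = sl^3 := div_mul_cancel₀ _ (ne_of_gt hDD)
        linarith
      have h6 : sl^3 ≤ s^3 := pow_le_pow_left₀ hsl.le hs_lb 3
      have h7 : (C7+1)*s^3 ≤ (4*lam*m^2)*s^3 :=
        mul_le_mul_of_nonneg_right hlamm (by positivity)
      have h8 : 4*lam*s^3*m^2 ≤ 4*lam*s^3*p^2 := by
        have h9 : m^2 ≤ p^2 := pow_le_pow_left₀ hm.le hpl 2
        have h10 : 0 ≤ 4*lam*s^3 := by positivity
        exact mul_le_mul_of_nonneg_left h9 h10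
      have h11 : 0 ≤ η*(Q - s^2*p)^2 := by positivity
      linarith
    · -- case B : large frequencies
      have hBT : B1*s^2 ≤ T2 := by
        rw [hB1def, div_mul_eq_mul_div, div_le_iff₀ hKinf]
        linarith
      have hB1T : B1' ≤ T2 := by
        have h1 : sl^2 ≤ s^2 := pow_le_pow_left₀ hsl.le hs_lb 2
        have h2 : B1*sl^2 ≤ B1*s^2 := mul_le_mul_of_nonneg_left h1 hB1.le
        rw [hB1'def]
        linarith
      have hT2pos : 0 < T2 := lt_of_lt_of_le hB1' hB1T
      have hqlow : Kinf*T2/2 ≤ Q - s^2*p := by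
        have h1 : s^2*p ≤ s^2*M := mul_le_mul_of_nonneg_left hpu (sq_nonneg s)
        linarith
      have hqsq : (Kinf*T2/2)^2 ≤ (Q - s^2*p)^2 :=
        pow_le_pow_left₀ (by positivity) hqlow 2
      have b1 : c*(1+T2)^2 ≤ c*(1 + 1/B1')^2*T2^2 := by
        have h1 : 1 ≤ T2/B1' := (one_le_div hB1').2 hB1T
        have h2 : 1 + T2 ≤ (1 + 1/B1')*T2 := by
          have h3 : (1 + 1/B1')*T2 = T2 + T2/B1' := by ring
          linarith
        have h4 : (1+T2)^2 ≤ ((1 + 1/B1')*T2)^2 :=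
          pow_le_pow_left₀ (by linarith) h2 2
        have h5 : ((1 + 1/B1')*T2)^2 = (1 + 1/B1')^2*T2^2 := by ring
        have h6 := mul_le_mul_of_nonneg_left h4 hc.le
        have h7 : c*(((1 + 1/B1')*T2)^2) = c*(1 + 1/B1')^2*T2^2 := by ring
        linarith
      have b2 : C6a*(s*T2) ≤ (C6a*su/B1')*T2^2 := by
        have h1 : T2 ≤ T2^2/B1' := by
          rw [le_div_iff₀ hB1']
          have h0 := mul_le_mul_of_nonneg_left hB1T hT2nn
          have h0' : T2*T2 = T2^2 := by ring
          linarith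
        have h2 : s*T2 ≤ su*(T2^2/B1') :=
          mul_le_mul hs_ub h1 hT2nn hsu.le
        have h3 : C6a*(s*T2) ≤ C6a*(su*(T2^2/B1')) := mul_le_mul_of_nonneg_left h2 hC6a
        have h4 : C6a*(su*(T2^2/B1')) = (C6a*su/B1')*T2^2 := by ring
        linarith
      have b3 : C6b*s^3 ≤ (C6b*su^3/B1'^2)*T2^2 := by
        have h1 : (1:ℝ) ≤ T2^2/B1'^2 := by
          rw [one_le_div (by positivity)]
          exact pow_le_pow_left₀ hB1'.le hB1T 2
        have h2 : s^3 ≤ su^3 := pow_le_pow_left₀ hs_pos.le hs_ub 3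
        have h3 : su^3 ≤ su^3*(T2^2/B1'^2) := by
          have h0 := mul_le_mul_of_nonneg_left h1 (pow_nonneg hsu.le 3)
          linarith
        have h4 : C6b*s^3 ≤ C6b*(su^3*(T2^2/B1'^2)) :=
          mul_le_mul_of_nonneg_left (le_trans h2 h3) hC6b
        have h5 : C6b*(su^3*(T2^2/B1'^2)) = (C6b*su^3/B1'^2)*T2^2 := by ring
        linarith
      have hGT : c*(1+T2)^2 + (C6a*(s*T2) + C6b*s^3) ≤ G*T2^2 := by
        have h1 : G*T2^2 = c*(1 + 1/B1')^2*T2^2 + ((C6a*su/B1')*T2^2 + (C6b*su^3/B1'^2)*T2^2) := by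
          rw [hGdef]; ring
        calc c*(1+T2)^2 + (C6a*(s*T2) + C6b*s^3)
            ≤ c*(1 + 1/B1')^2*T2^2 + ((C6a*su/B1')*T2^2 + (C6b*su^3/B1'^2)*T2^2) :=
              add_le_add b1 (add_le_add b2 b3)
          _ = G*T2^2 := h1.symm
      have he : η*(Kinf*T2/2)^2 = G*T2^2 + Kinf^2*T2^2/4 := by
        rw [hηdef]
        field_simp
        ring
      have h2 : η*(Kinf*T2/2)^2 ≤ η*(Q - s^2*p)^2 := mul_le_mul_of_nonneg_left hqsq hη.le
      have h3 : 0 ≤ 4*lam*s^3*p^2 := by positivity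
      have h4 : 0 ≤ Kinf^2*T2^2/4 := by positivity
      calc c*(1+T2)^2 + (C6a*(s*T2) + C6b*s^3)
          ≤ G*T2^2 := hGT
        _ ≤ G*T2^2 + Kinf^2*T2^2/4 := le_add_of_nonneg_right h4
        _ = η*(Kinf*T2/2)^2 := he.symm
        _ ≤ η*(Q - s^2*p)^2 := h2
        _ ≤ η*(Q - s^2*p)^2 + 4*lam*s^3*p^2 := le_add_of_nonneg_right h3
  -- conclude
  rw [hqr, hqi, hbr]
  have hsplit : η*((Q - s^2*p)^2 + (2*(s*u))^2) = η*(Q - s^2*p)^2 + η*(2*(s*u))^2 := by ring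
  rw [hsplit]
  have h1 : 0 ≤ η*(2*(s*u))^2 := by positivity
  have h2 : 0 ≤ 4*lam*s*u^2 := by positivity
  linarith
end

section
/- Let γ : ℝ^d → ℝ be a nonnegative C¹ function whose gradient is bounded by M on ℝ^d, and let χ : ℝ → ℝ be a C¹ function and 0 < ν ≤ a be such that χ'(s) = 0 whenever s < ν or s > a, with |χ'| ≤ M' on ℝ. Then for every x ∈ ℝ^d one has ‖∇(χ ∘ γ)(x)‖ ≤ (M·M'/ν)·γ(x); that is, every first derivative of χ ∘ γ is pointwise controlled by a constant multiple κ·γ of the damping itself, with κ = M·M'/ν. -/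
/-- Let `γ` be a nonnegative `C¹` function on `ℝ^d` with `‖∇γ‖ ≤ M`, and
let `χ : ℝ → ℝ` be `C¹` with `χ'(s) = 0` for `s < ν` or `s > a` (where `0 < ν ≤ a`) and
`|χ'| ≤ M'`. Then `‖∇(χ ∘ γ)(x)‖ ≤ (M M'/ν) γ(x)` for every `x`; i.e. every first
derivative of `χ ∘ γ` is pointwise controlled by `κ γ` with `κ = M M'/ν`. -/
theorem stmt13 {d : ℕ} (γ : EuclideanSpace ℝ (Fin d) → ℝ)
    (hnonneg : ∀ x, 0 ≤ γ x) (hC1 : ContDiff ℝ 1 γ)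
    (M : ℝ) (hM : ∀ x, ‖gradient γ x‖ ≤ M)
    (χ : ℝ → ℝ) (hχ : ContDiff ℝ 1 χ)
    (ν a : ℝ) (hν : 0 < ν) (hνa : ν ≤ a)
    (hχ' : ∀ s : ℝ, (s < ν ∨ a < s) → deriv χ s = 0)
    (M' : ℝ) (hM' : ∀ s : ℝ, |deriv χ s| ≤ M') :
    ∀ x, ‖gradient (χ ∘ γ) x‖ ≤ (M * M' / ν) * γ x := by
  intro x
  have hγd : DifferentiableAt ℝ γ x := (hC1.differentiable one_ne_zero) x
  have hχd : HasDerivAt χ (deriv χ (γ x)) (γ x) :=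
    ((hχ.differentiable one_ne_zero) (γ x)).hasDerivAt
  have hgrad : HasGradientAt (χ ∘ γ) (deriv χ (γ x) • gradient γ x) x := by
    have h1 : HasFDerivAt γ (InnerProductSpace.toDual ℝ _ (gradient γ x)) x :=
      hγd.hasGradientAt.hasFDerivAt
    have h2 := hχd.comp_hasFDerivAt x h1
    rw [hasGradientAt_iff_hasFDerivAt]
    convert h2 using 1
    ext v
    simp [real_inner_smul_left, mul_comm]
    ext v
    simp [real_inner_smul_left, mul_comm]
  rw [hgrad.gradient, norm_smul]
  have hM0 : 0 ≤ M := le_trans (norm_nonneg _) (hM x)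
  have hM'0 : 0 ≤ M' := le_trans (abs_nonneg _) (hM' 0)
  by_cases h : deriv χ (γ x) = 0
  · simp [h]
    exact mul_nonneg (div_nonneg (mul_nonneg hM0 hM'0) hν.le) (hnonneg x)
  · have hγν : ν ≤ γ x := by
      by_contra hlt
      exact h (hχ' _ (Or.inl (not_le.mp hlt)))
    calc ‖deriv χ (γ x)‖ * ‖gradient γ x‖ ≤ M' * M := by
          apply mul_le_mul (hM' _) (hM x) (norm_nonneg _) hM'0
      _ = (M * M' / ν) * ν := by field_simp
      _ ≤ (M * M' / ν) * γ x := by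
          exact mul_le_mul_of_nonneg_left hγν
            (div_nonneg (mul_nonneg hM0 hM'0) hν.le)
end
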